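/- arXiv:1411.0951 — 9 statements merged into one kernel-verified Lean document; each statement's English description precedes it below -/
import Mathlib

section
/- For every smooth function f : ℝ³ → ℝ, the vector field ξ = H⁻¹(f) = (∂f/∂x³) ∂₁ + (f − x³ ∂f/∂x³) ∂₂ − (∂f/∂x¹ − x³ ∂f/∂x²) ∂₃ satisfies the identity of 1-forms θ(ξ)ω = (∂f/∂x²)·ω, where ω = dx² + x³dx¹; in particular θ(ξ)ω = 0 (ξ preserves the form ω itself, not merely the system it generates) if and only if ∂f/∂x² = 0 identically. -/
open scoped BigOperators

noncomputable section

/-- The coordinate 1-form `dxⁱ` on `ℝⁿ` (as a constant continuous linear functional). -/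
def dxi {n : ℕ} (i : Fin n) : (Fin n → ℝ) →L[ℝ] ℝ := ContinuousLinearMap.proj i

/-- The Lie derivative `θ(ξ)ω = d(ι(ξ)ω) + ι(ξ)(dω)` of a 1-form `ω` along a vector
field `ξ`, evaluated at the point `x` on the tangent vector `v`.  Here
`ι(ξ)ω : x ↦ ω_x(ξ x)`, `d` of a function is `fderiv`, and
`(dω)_x(u,v) = (D_u ω)(v) − (D_v ω)(u)`. -/
def lieD {n : ℕ} (ξ : (Fin n → ℝ) → (Fin n → ℝ))
    (ω : (Fin n → ℝ) → (Fin n → ℝ) →L[ℝ] ℝ) (x v : Fin n → ℝ) : ℝ :=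
  fderiv ℝ (fun y => ω y (ξ y)) x v
    + ((fderiv ℝ ω x (ξ x)) v - (fderiv ℝ ω x v) (ξ x))

/-- `ξ` is an infinitesimal automorphism of the Pfaffian system spanned by the
1-forms `ω 0, …, ω (r-1)` : each Lie derivative `θ(ξ)(ω i)` lies, at every point,
in the linear span of the `ω j`. -/
def IsIA {n r : ℕ} (ω : Fin r → (Fin n → ℝ) → (Fin n → ℝ) →L[ℝ] ℝ)
    (ξ : (Fin n → ℝ) → (Fin n → ℝ)) : Prop :=
  ∀ i : Fin r, ∀ x : Fin n → ℝ, ∃ c : Fin r → ℝ,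
    ∀ v : Fin n → ℝ, lieD ξ (ω i) x v = ∑ j, c j * ω j x v

/-- The partial derivative `∂f/∂xⁱ`. -/
def pd {n : ℕ} (i : Fin n) (f : (Fin n → ℝ) → ℝ) : (Fin n → ℝ) → ℝ :=
  fun x => fderiv ℝ f x (Pi.single i 1)

/-- The Darboux contact form `ω = dx² + x³dx¹` on `ℝ³`. -/
def darboux (x : Fin 3 → ℝ) : (Fin 3 → ℝ) →L[ℝ] ℝ := dxi 1 + x 2 • dxi 0


/-- The contact-Hamiltonian inverse `H⁻¹(f)
  = (∂f/∂x³)∂₁ + (f − x³∂f/∂x³)∂₂ − (∂f/∂x¹ − x³∂f/∂x²)∂₃`. -/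
def Hinv (f : (Fin 3 → ℝ) → ℝ) : (Fin 3 → ℝ) → (Fin 3 → ℝ) :=
  fun x => ![pd 2 f x, f x - x 2 * pd 2 f x, -(pd 0 f x - x 2 * pd 1 f x)]

lemma fderiv_expand3 (f : (Fin 3 → ℝ) → ℝ) (x v : Fin 3 → ℝ) :
    fderiv ℝ f x v = v 0 * pd 0 f x + v 1 * pd 1 f x + v 2 * pd 2 f x := by
  have hv : v = v 0 • (Pi.single 0 1 : Fin 3 → ℝ) + v 1 • (Pi.single 1 1 : Fin 3 → ℝ)
      + v 2 • (Pi.single 2 1 : Fin 3 → ℝ) := by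
    funext j; fin_cases j <;> simp
  conv_lhs => rw [hv]
  simp [pd, mul_comm]

lemma darboux_fderiv (x : Fin 3 → ℝ) :
    fderiv ℝ darboux x = (dxi 2).smulRight (dxi (0:Fin 3)) := by
  have hd : darboux = fun y => dxi 1 + ((dxi 2).smulRight (dxi (0:Fin 3))) y := by
    funext y; ext v; simp [darboux, dxi]
  rw [hd, fderiv_const_add, ContinuousLinearMap.fderiv]

lemma contraction_eq (f : (Fin 3 → ℝ) → ℝ) :
    (fun y => darboux y (Hinv f y)) = f := by
  funext y
  simp [darboux, Hinv, dxi]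

/-- For smooth `f : ℝ³ → ℝ`, the vector field `ξ = H⁻¹(f)` satisfies
`θ(ξ)ω = (∂f/∂x²)·ω` for `ω = dx² + x³dx¹`; in particular `θ(ξ)ω = 0` iff
`∂f/∂x² = 0` identically. -/
theorem stmt1 (f : (Fin 3 → ℝ) → ℝ) (hf : ContDiff ℝ (⊤ : ℕ∞) f) :
    (∀ x v : Fin 3 → ℝ, lieD (Hinv f) darboux x v = pd 1 f x * darboux x v)
    ∧ ((∀ x v : Fin 3 → ℝ, lieD (Hinv f) darboux x v = 0) ↔
        ∀ x : Fin 3 → ℝ, pd 1 f x = 0) := by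
  have key : ∀ x v : Fin 3 → ℝ, lieD (Hinv f) darboux x v = pd 1 f x * darboux x v := by
    intro x v
    unfold lieD
    rw [contraction_eq, darboux_fderiv, fderiv_expand3]
    simp [darboux, dxi, Hinv]
    ring
  refine ⟨key, ?_, fun h x v => by rw [key, h, zero_mul]⟩
  intro h x
  have := h x (Pi.single 1 1)
  rw [key] at this
  simpa [darboux, dxi] using this
end
end

section
/- Let A, B, C be smooth functions of (x¹,x²,x³) such that ξ = A ∂₁ + B ∂₂ + C ∂₃ is an infinitesimal automorphism of the Darboux flag, regarded as functions on ℝ⁴ independent of x⁴, and let D : ℝ⁴ → ℝ be smooth. Then the vector field ζ = A ∂₁ + B ∂₂ + C ∂₃ + D ∂₄ on ℝ⁴ is an infinitesimal automorphism of the Engel flag if and only if D = (∂C/∂x² + x⁴ ∂A/∂x²)·x³ + (∂C/∂x³ + x⁴ ∂A/∂x³)·x⁴ − (∂C/∂x¹ + x⁴ ∂A/∂x¹). In particular, every infinitesimal automorphism of the Darboux flag prolongs to a unique infinitesimal automorphism of the Engel flag projecting onto it. -/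
open scoped BigOperators

noncomputable section

/-- The Engel flag on `ℝ⁴`, generated by `ω¹ = dx² + x³dx¹` and `ω² = dx³ + x⁴dx¹`. -/
def engel : Fin 2 → (Fin 4 → ℝ) → (Fin 4 → ℝ) →L[ℝ] ℝ :=
  ![fun x => dxi 1 + x 2 • dxi 0, fun x => dxi 2 + x 3 • dxi 0]

/-- Projection `ℝ⁴ → ℝ³` onto the first three coordinates. -/
def p43 (x : Fin 4 → ℝ) : Fin 3 → ℝ := fun i => x (Fin.castLE (by norm_num) i)

def P43 : (Fin 4 → ℝ) →L[ℝ] (Fin 3 → ℝ) :=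
  ContinuousLinearMap.pi (fun i => ContinuousLinearMap.proj (Fin.castLE (by norm_num) i))
lemma hasFDeriv_comp_p43 (f : (Fin 3 → ℝ) → ℝ) (hf : Differentiable ℝ f) (x : Fin 4 → ℝ) :
    HasFDerivAt (fun y => f (p43 y)) ((fderiv ℝ f (p43 x)).comp P43) x :=
  ((hf (p43 x)).hasFDerivAt).comp x P43.hasFDerivAt
lemma hasFDeriv_form (i k : Fin 4) (x : Fin 4 → ℝ) :
    HasFDerivAt (fun y : Fin 4 → ℝ => dxi i + y k • dxi 0)
      ((ContinuousLinearMap.proj k : (Fin 4 → ℝ) →L[ℝ] ℝ).smulRight (dxi 0)) x := by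
  have h := ((ContinuousLinearMap.proj k : (Fin 4 → ℝ) →L[ℝ] ℝ).hasFDerivAt (x := x)).smul_const (dxi (0 : Fin 4))
  exact ((hasFDerivAt_const (dxi i) x).add h).congr_fderiv (by simp)
lemma hasFDeriv_darboux (x : Fin 3 → ℝ) :
    HasFDerivAt darboux
      ((ContinuousLinearMap.proj 2 : (Fin 3 → ℝ) →L[ℝ] ℝ).smulRight (dxi 0)) x := by
  have h := ((ContinuousLinearMap.proj 2 : (Fin 3 → ℝ) →L[ℝ] ℝ).hasFDerivAt (x := x)).smul_const (dxi (0 : Fin 3))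
  exact ((hasFDerivAt_const (dxi (1 : Fin 3)) x).add h).congr_fderiv (by simp)
lemma expand3 (L : (Fin 3 → ℝ) →L[ℝ] ℝ) (w : Fin 3 → ℝ) :
    L w = w 0 * L (Pi.single 0 1) + w 1 * L (Pi.single 1 1) + w 2 * L (Pi.single 2 1) := by
  have hw : w = w 0 • (Pi.single 0 1 : Fin 3 → ℝ) + w 1 • (Pi.single 1 1 : Fin 3 → ℝ)
      + w 2 • (Pi.single 2 1 : Fin 3 → ℝ) := by
    funext i; fin_cases i <;> simp [Pi.single_apply]
  conv_lhs => rw [hw]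
  simp [smul_eq_mul]

lemma lie1 (A B C : (Fin 3 → ℝ) → ℝ) (hA : Differentiable ℝ A) (hC : Differentiable ℝ C)
    (D : (Fin 4 → ℝ) → ℝ) (x v : Fin 4 → ℝ) :
    lieD (fun y => ![A (p43 y), B (p43 y), C (p43 y), D y]) (engel 1) x v
      = (pd 0 C (p43 x) + x 3 * pd 0 A (p43 x) + D x) * v 0
        + (pd 1 C (p43 x) + x 3 * pd 1 A (p43 x)) * v 1
        + (pd 2 C (p43 x) + x 3 * pd 2 A (p43 x)) * v 2 := by
  have hfun : (fun y => (engel 1) y (![A (p43 y), B (p43 y), C (p43 y), D y]))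
      = fun y => C (p43 y) + y 3 * A (p43 y) := by
    funext y; simp [engel, dxi]
  have hder : HasFDerivAt (fun y : Fin 4 → ℝ => C (p43 y) + y 3 * A (p43 y))
      ((fderiv ℝ C (p43 x)).comp P43
        + (x 3 • (fderiv ℝ A (p43 x)).comp P43 + A (p43 x) • (ContinuousLinearMap.proj 3))) x :=
    (hasFDeriv_comp_p43 C hC x).add
      (((ContinuousLinearMap.proj (3 : Fin 4)).hasFDerivAt).mul (hasFDeriv_comp_p43 A hA x))
  have hω : fderiv ℝ (engel 1) x
      = (ContinuousLinearMap.proj (3 : Fin 4)).smulRight (dxi 0) := by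
    have : engel 1 = fun y : Fin 4 → ℝ => dxi 2 + y 3 • dxi 0 := by simp [engel]
    rw [this]; exact (hasFDeriv_form 2 3 x).fderiv
  rw [lieD, hfun, hder.fderiv, hω]
  have e1 := expand3 (fderiv ℝ C (p43 x)) (p43 v)
  have e2 := expand3 (fderiv ℝ A (p43 x)) (p43 v)
  simp only [ContinuousLinearMap.add_apply, ContinuousLinearMap.comp_apply,
    ContinuousLinearMap.smul_apply, ContinuousLinearMap.smulRight_apply,
    ContinuousLinearMap.proj_apply, smul_eq_mul]
  have hPv : P43 v = p43 v := rfl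
  rw [hPv, e1, e2]
  simp only [show p43 v 0 = v 0 from rfl, show p43 v 1 = v 1 from rfl,
    show p43 v 2 = v 2 from rfl]
  simp [dxi, pd]
  ring

lemma lie0 (A B C : (Fin 3 → ℝ) → ℝ) (hA : Differentiable ℝ A) (hB : Differentiable ℝ B)
    (D : (Fin 4 → ℝ) → ℝ) (x v : Fin 4 → ℝ) :
    lieD (fun y => ![A (p43 y), B (p43 y), C (p43 y), D y]) (engel 0) x v
      = lieD (fun z => ![A z, B z, C z]) darboux (p43 x) (p43 v) := by
  have hg : Differentiable ℝ (fun z : Fin 3 → ℝ => B z + z 2 * A z) :=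
    hB.add (((ContinuousLinearMap.proj (2 : Fin 3)).differentiable).mul hA)
  have hfun : (fun y => (engel 0) y (![A (p43 y), B (p43 y), C (p43 y), D y]))
      = fun y => B (p43 y) + p43 y 2 * A (p43 y) := by
    funext y; simp [engel, dxi]; left; rfl
  have hfun' : (fun z => darboux z (![A z, B z, C z]))
      = fun z : Fin 3 → ℝ => B z + z 2 * A z := by
    funext z; simp [darboux, dxi]
  have hder : HasFDerivAt (fun y => B (p43 y) + p43 y 2 * A (p43 y))
      ((fderiv ℝ (fun z : Fin 3 → ℝ => B z + z 2 * A z) (p43 x)).comp P43) x :=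
    hasFDeriv_comp_p43 _ hg x
  have hω : fderiv ℝ (engel 0) x
      = (ContinuousLinearMap.proj (2 : Fin 4)).smulRight (dxi 0) := by
    have : engel 0 = fun y : Fin 4 → ℝ => dxi 1 + y 2 • dxi 0 := by simp [engel]
    rw [this]; exact (hasFDeriv_form 1 2 x).fderiv
  rw [lieD, lieD, hfun, hfun', hder.fderiv, hω, (hasFDeriv_darboux (p43 x)).fderiv]
  simp only [ContinuousLinearMap.comp_apply, ContinuousLinearMap.smulRight_apply,
    ContinuousLinearMap.proj_apply, smul_eq_mul]
  have hPv : P43 v = p43 v := rfl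
  rw [hPv]
  have h0 : p43 v 0 = v 0 := rfl
  have h2 : p43 v 2 = v 2 := rfl
  simp only [ContinuousLinearMap.smul_apply, smul_eq_mul, dxi,
    ContinuousLinearMap.proj_apply, Matrix.cons_val_zero, Matrix.cons_val_one,
    Matrix.head_cons, Matrix.cons_val_two, Matrix.tail_cons]
  rw [h0, h2]

lemma engel_apply0 (x v : Fin 4 → ℝ) : engel 0 x v = v 1 + x 2 * v 0 := by
  simp [engel, dxi]
lemma engel_apply1 (x v : Fin 4 → ℝ) : engel 1 x v = v 2 + x 3 * v 0 := by
  simp [engel, dxi]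
lemma darboux_apply (z w : Fin 3 → ℝ) : darboux z w = w 1 + z 2 * w 0 := by
  simp [darboux, dxi]

/-- If `A∂₁ + B∂₂ + C∂₃` is an infinitesimal automorphism of the
Darboux flag (with `A,B,C` functions of `(x¹,x²,x³)` only) and `D : ℝ⁴ → ℝ` is
smooth, then `ζ = A∂₁ + B∂₂ + C∂₃ + D∂₄` is an infinitesimal automorphism of the
Engel flag iff
`D = (∂C/∂x² + x⁴∂A/∂x²)x³ + (∂C/∂x³ + x⁴∂A/∂x³)x⁴ − (∂C/∂x¹ + x⁴∂A/∂x¹)`.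
In particular every infinitesimal automorphism of the Darboux flag prolongs to a
unique infinitesimal automorphism of the Engel flag projecting onto it. -/
theorem stmt3 (A B C : (Fin 3 → ℝ) → ℝ)
    (hA : ContDiff ℝ (⊤ : ℕ∞) A) (hB : ContDiff ℝ (⊤ : ℕ∞) B) (hC : ContDiff ℝ (⊤ : ℕ∞) C)
    (hIA : IsIA ![darboux] (fun x => ![A x, B x, C x]))
    (D : (Fin 4 → ℝ) → ℝ) (hD : ContDiff ℝ (⊤ : ℕ∞) D) :
    (IsIA engel (fun x => ![A (p43 x), B (p43 x), C (p43 x), D x]) ↔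
      ∀ x : Fin 4 → ℝ,
        D x = (pd 1 C (p43 x) + x 3 * pd 1 A (p43 x)) * x 2
            + (pd 2 C (p43 x) + x 3 * pd 2 A (p43 x)) * x 3
            - (pd 0 C (p43 x) + x 3 * pd 0 A (p43 x)))
    ∧ (∃! D' : (Fin 4 → ℝ) → ℝ, ContDiff ℝ (⊤ : ℕ∞) D' ∧
        IsIA engel (fun x => ![A (p43 x), B (p43 x), C (p43 x), D' x])) := by
  have hA' := hA.differentiable (by simp)
  have hB' := hB.differentiable (by simp)
  have hC' := hC.differentiable (by simp)
  have key : ∀ E : (Fin 4 → ℝ) → ℝ,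
      IsIA engel (fun x => ![A (p43 x), B (p43 x), C (p43 x), E x]) ↔
      ∀ x : Fin 4 → ℝ,
        E x = (pd 1 C (p43 x) + x 3 * pd 1 A (p43 x)) * x 2
            + (pd 2 C (p43 x) + x 3 * pd 2 A (p43 x)) * x 3
            - (pd 0 C (p43 x) + x 3 * pd 0 A (p43 x)) := by
    intro E
    constructor
    · intro h x
      obtain ⟨c, hc⟩ := h 1 x
      have h0 := hc ![1,0,0,0]
      have h1 := hc ![0,1,0,0]
      have h2 := hc ![0,0,1,0]
      rw [lie1 A B C hA' hC' E x _] at h0 h1 h2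
      simp only [Fin.sum_univ_two, engel_apply0, engel_apply1, Matrix.cons_val_zero,
        Matrix.cons_val_one, Matrix.head_cons, Matrix.cons_val_two, Matrix.tail_cons] at h0 h1 h2
      norm_num at h0 h1 h2
      rw [h1, h2]
      linarith [h0]
    · intro h i x
      fin_cases i
      · obtain ⟨c, hc⟩ := hIA 0 (p43 x)
        refine ⟨![c 0, 0], fun v => ?_⟩
        have := hc (p43 v)
        simp only [Fin.sum_univ_one, Matrix.cons_val_zero, Matrix.cons_val_fin_one] at this
        rw [show (⟨0, by norm_num⟩ : Fin 2) = 0 from rfl,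
          lie0 A B C hA' hB' E x v, this]
        simp only [Fin.sum_univ_two, engel_apply0, engel_apply1, darboux_apply,
          Matrix.cons_val_zero, Matrix.cons_val_one, Matrix.head_cons]
        have e1 : p43 v 1 = v 1 := rfl
        have e0 : p43 v 0 = v 0 := rfl
        have e2 : p43 x 2 = x 2 := rfl
        rw [e0, e1, e2]
        ring
      · refine ⟨![pd 1 C (p43 x) + x 3 * pd 1 A (p43 x),
          pd 2 C (p43 x) + x 3 * pd 2 A (p43 x)], fun v => ?_⟩
        rw [show (⟨1, by norm_num⟩ : Fin 2) = 1 from rfl,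
          lie1 A B C hA' hC' E x v, h x]
        simp only [Fin.sum_univ_two, engel_apply0, engel_apply1,
          Matrix.cons_val_zero, Matrix.cons_val_one, Matrix.head_cons]
        ring
  refine ⟨key D, ?_⟩
  have hC1 : ContDiff ℝ (⊤ : ℕ∞) (fderiv ℝ C) := hC.fderiv_right (by simp)
  have hA1 : ContDiff ℝ (⊤ : ℕ∞) (fderiv ℝ A) := hA.fderiv_right (by simp)
  have hpd : ∀ (i : Fin 3) (f : (Fin 3 → ℝ) → ℝ), ContDiff ℝ (⊤ : ℕ∞) (fderiv ℝ f) →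
      ContDiff ℝ (⊤ : ℕ∞) (fun x : Fin 4 → ℝ => pd i f (p43 x)) := by
    intro i f hf
    exact (ContinuousLinearMap.apply ℝ ℝ ((Pi.single i 1 : Fin 3 → ℝ))).contDiff.comp
      (hf.comp P43.contDiff)
  have hproj : ∀ i : Fin 4, ContDiff ℝ (⊤ : ℕ∞) (fun x : Fin 4 → ℝ => x i) := fun i =>
    (ContinuousLinearMap.proj i : (Fin 4 → ℝ) →L[ℝ] ℝ).contDiff
  have hF : ContDiff ℝ (⊤ : ℕ∞) (fun x : Fin 4 → ℝ =>
      (pd 1 C (p43 x) + x 3 * pd 1 A (p43 x)) * x 2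
        + (pd 2 C (p43 x) + x 3 * pd 2 A (p43 x)) * x 3
        - (pd 0 C (p43 x) + x 3 * pd 0 A (p43 x))) := by
    exact ((((hpd 1 C hC1).add ((hproj 3).mul (hpd 1 A hA1))).mul (hproj 2)).add
      (((hpd 2 C hC1).add ((hproj 3).mul (hpd 2 A hA1))).mul (hproj 3))).sub
      ((hpd 0 C hC1).add ((hproj 3).mul (hpd 0 A hA1)))
  refine ⟨_, ⟨hF, (key _).mpr (fun x => rfl)⟩, ?_⟩
  rintro D' ⟨hD', hIAD'⟩
  funext x
  exact (key D').mp hIAD' x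
end
end

section
/- Let f : ℝ⁴ → ℝ be smooth. If the 'vertical' vector field f ∂₄ on ℝ⁴ (a vector field tangent to the one-dimensional characteristic direction of the derived system of the Engel flag) is an infinitesimal automorphism of the Engel flag, then f = 0 identically. -/
open scoped BigOperators

noncomputable section

/-- If the vertical vector field `f ∂₄` on `ℝ⁴` is an infinitesimal
automorphism of the Engel flag, then `f = 0` identically. -/
theorem stmt4 (f : (Fin 4 → ℝ) → ℝ) (hf : ContDiff ℝ (⊤ : ℕ∞) f)
    (h : IsIA engel (fun x => ![0, 0, 0, f x])) :
    ∀ x : Fin 4 → ℝ, f x = 0 := by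
  intro x
  obtain ⟨c, hc⟩ := h 1 x
  set L : (Fin 4 → ℝ) →L[ℝ] ((Fin 4 → ℝ) →L[ℝ] ℝ) :=
    (ContinuousLinearMap.proj (R := ℝ) (φ := fun _ : Fin 4 => ℝ) 3).smulRight (dxi 0) with hL
  have hω : engel 1 = fun y => dxi 2 + L y := by
    funext y
    simp [engel, hL, ContinuousLinearMap.smulRight_apply]
  have hzero : (fun y => engel 1 y ((fun x => ![0, 0, 0, f x]) y)) = fun _ => (0:ℝ) := by
    funext y
    simp [engel, dxi]
  have hfd : fderiv ℝ (engel 1) x = L := by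
    rw [hω, fderiv_const_add, L.fderiv]
  have hlie : ∀ v, lieD (fun x => ![0, 0, 0, f x]) (engel 1) x v = f x * v 0 := by
    intro v
    unfold lieD
    rw [hzero, fderiv_fun_const, hfd]
    simp [hL, dxi, ContinuousLinearMap.smulRight_apply]
  have key : ∀ v : Fin 4 → ℝ, f x * v 0 = c 0 * (v 1 + x 2 * v 0) + c 1 * (v 2 + x 3 * v 0) := by
    intro v
    have := hc v
    rw [hlie] at this
    simpa [Fin.sum_univ_two, engel, dxi] using this
  have h0 := key (Pi.single 1 1)
  have h1 := key (Pi.single 2 1)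
  have h2 := key (Pi.single 0 1)
  simp [Pi.single_apply] at h0 h1 h2
  rw [h2, ← h0, ← h1]
  ring
end
end

section
/- The algebra of infinitesimal automorphisms of the Engel flag acts transitively on ℝ⁴: for every point p ∈ ℝ⁴ and every vector v ∈ ℝ⁴ there exist smooth functions A, B, C of (x¹,x²,x³) such that A ∂₁ + B ∂₂ + C ∂₃ is an infinitesimal automorphism of the Darboux flag and its Engel prolongation A ∂₁ + B ∂₂ + C ∂₃ + D ∂₄, with D = (∂C/∂x² + x⁴ ∂A/∂x²)·x³ + (∂C/∂x³ + x⁴ ∂A/∂x³)·x⁴ − (∂C/∂x¹ + x⁴ ∂A/∂x¹), takes the value v at p. -/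
open scoped BigOperators

noncomputable section

lemma hasFDerivAt_darboux (x : Fin 3 → ℝ) :
    HasFDerivAt darboux ((dxi 2).smulRight (dxi (0 : Fin 3))) x := by
  have h : darboux = fun y => ((dxi 2).smulRight (dxi (0 : Fin 3))) y + dxi 1 := by
    funext y
    ext w
    simp [darboux, dxi, ContinuousLinearMap.smulRight_apply]
    ring
  rw [h]
  exact (((dxi 2).smulRight (dxi (0 : Fin 3))).hasFDerivAt).add_const _

lemma hx (i : Fin 3) (x : Fin 3 → ℝ) :
    HasFDerivAt (fun y : Fin 3 → ℝ => y i) (dxi i) x :=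
  (ContinuousLinearMap.proj i : (Fin 3 → ℝ) →L[ℝ] ℝ).hasFDerivAt

/-- The algebra of infinitesimal automorphisms of the Engel flag acts
transitively on `ℝ⁴`: for every `p, v ∈ ℝ⁴` there are smooth `A, B, C` of
`(x¹,x²,x³)` with `A∂₁ + B∂₂ + C∂₃` an infinitesimal automorphism of the Darboux
flag whose Engel prolongation (with
`D = (∂C/∂x² + x⁴∂A/∂x²)x³ + (∂C/∂x³ + x⁴∂A/∂x³)x⁴ − (∂C/∂x¹ + x⁴∂A/∂x¹)`)
takes the value `v` at `p`. -/
theorem stmt5 (p v : Fin 4 → ℝ) :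
    ∃ A B C : (Fin 3 → ℝ) → ℝ,
      ContDiff ℝ (⊤ : ℕ∞) A ∧ ContDiff ℝ (⊤ : ℕ∞) B ∧ ContDiff ℝ (⊤ : ℕ∞) C ∧
      IsIA ![darboux] (fun x => ![A x, B x, C x]) ∧
      (fun x : Fin 4 → ℝ => ![A (p43 x), B (p43 x), C (p43 x),
          (pd 1 C (p43 x) + x 3 * pd 1 A (p43 x)) * x 2
        + (pd 2 C (p43 x) + x 3 * pd 2 A (p43 x)) * x 3
        - (pd 0 C (p43 x) + x 3 * pd 0 A (p43 x))]) p = v := by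
  set c : ℝ := v 2 + v 3 * p 0 with hc
  set d : ℝ := v 3 with hd
  set e : ℝ := d / 2 with he
  set b : ℝ := v 1 + c * p 0 - e * (p 0 * p 0) with hb
  refine ⟨fun _ => v 0, fun x => b - c * x 0 + e * (x 0 * x 0),
    fun x => c - d * x 0, contDiff_const, by fun_prop, by fun_prop, ?_, ?_⟩
  · intro i x
    refine ⟨fun _ => 0, fun w => ?_⟩
    have hi : (![darboux] : Fin 1 → _) i = darboux := by
      simp [Matrix.cons_val_fin_one]
    rw [hi]
    have hfun : (fun y : Fin 3 → ℝ => darboux y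
        (![v 0, b - c * y 0 + e * (y 0 * y 0), c - d * y 0] : Fin 3 → ℝ))
        = fun y : Fin 3 → ℝ => (b - c * y 0 + e * (y 0 * y 0)) + y 2 * v 0 := by
      funext y
      simp [darboux, dxi]
    have hg : HasFDerivAt
        (fun y : Fin 3 → ℝ => (b - c * y 0 + e * (y 0 * y 0)) + y 2 * v 0)
        (((((0 : (Fin 3 → ℝ) →L[ℝ] ℝ)
            - c • dxi 0)
            + (e • (x 0 • dxi 0 + x 0 • dxi 0))))
          + (v 0) • dxi 2) x :=
      (((hasFDerivAt_const b x).sub ((hx 0 x).const_mul c)).add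
        ((((hx 0 x).mul (hx 0 x)).const_mul e))).add
        ((hx 2 x).mul_const (v 0))
    simp only [lieD, hfun, hg.fderiv, (hasFDerivAt_darboux x).fderiv]
    simp [dxi]
    ring
  · have hpdA : ∀ (i : Fin 3) (z : Fin 3 → ℝ), pd i (fun _ => v 0) z = 0 := by
      intro i z
      simp [pd, fderiv_const]
    have hC : ∀ z : Fin 3 → ℝ, HasFDerivAt (fun y : Fin 3 → ℝ => c - d * y 0)
        ((0 : (Fin 3 → ℝ) →L[ℝ] ℝ) - d • dxi 0) z := fun z =>
      (hasFDerivAt_const c z).sub ((hx 0 z).const_mul d)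
    have hpdC : ∀ (i : Fin 3) (z : Fin 3 → ℝ),
        pd i (fun y : Fin 3 → ℝ => c - d * y 0) z = -(d * (Pi.single i (1:ℝ) : Fin 3 → ℝ) 0) := by
      intro i z
      simp [pd, (hC z).fderiv, dxi]
    funext i
    fin_cases i
    · simp
    · have h0 : p43 p 0 = p 0 := rfl
      simp [h0, hb]
      try ring
    · have h0 : p43 p 0 = p 0 := rfl
      simp [h0, hc]
      try ring
    · have h0 : p43 p 0 = p 0 := rfl
      simp [hpdA, hpdC, h0, Pi.single_apply]
      try ring
end
end

section
/- Let A, B, C be smooth functions of (x¹,x²,x³) and D a smooth function of (x¹,x²,x³,x⁴) such that A ∂₁ + B ∂₂ + C ∂₃ + D ∂₄ is an infinitesimal automorphism of the Engel flag, all regarded as functions on ℝ⁵, and let E : ℝ⁵ → ℝ be smooth. Then ξ = A ∂₁ + B ∂₂ + C ∂₃ + D ∂₄ + E ∂₅ is an infinitesimal automorphism of the homogeneous Cartan flag of length three if and only if E = (∂D/∂x² + x⁵ ∂A/∂x²)·x³ + (∂D/∂x³ + x⁵ ∂A/∂x³)·x⁴ + (∂D/∂x⁴)·x⁵ − (∂D/∂x¹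 + x⁵ ∂A/∂x¹). In particular the prolongation is unique. -/
open scoped BigOperators

noncomputable section

/-- The homogeneous Cartan flag of length three on `ℝ⁵`, generated by
`ω¹ = dx² + x³dx¹`, `ω² = dx³ + x⁴dx¹`, `ω³ = dx⁴ + x⁵dx¹`. -/
def cartan : Fin 3 → (Fin 5 → ℝ) → (Fin 5 → ℝ) →L[ℝ] ℝ :=
  ![fun x => dxi 1 + x 2 • dxi 0, fun x => dxi 2 + x 3 • dxi 0,
    fun x => dxi 3 + x 4 • dxi 0]

/-- Projection `ℝ⁵ → ℝ³` onto the first three coordinates. -/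
def p53 (x : Fin 5 → ℝ) : Fin 3 → ℝ := fun i => x (Fin.castLE (by norm_num) i)

/-- Projection `ℝ⁵ → ℝ⁴` onto the first four coordinates. -/
def p54 (x : Fin 5 → ℝ) : Fin 4 → ℝ := fun i => x (Fin.castLE (by norm_num) i)

-- ===================== auxiliary material =====================

def p54L : (Fin 5 → ℝ) →L[ℝ] (Fin 4 → ℝ) :=
  ContinuousLinearMap.pi fun i => ContinuousLinearMap.proj (Fin.castLE (by norm_num) i)
def p53L : (Fin 5 → ℝ) →L[ℝ] (Fin 3 → ℝ) :=
  ContinuousLinearMap.pi fun i => ContinuousLinearMap.proj (Fin.castLE (by norm_num) i)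
def p43L : (Fin 4 → ℝ) →L[ℝ] (Fin 3 → ℝ) :=
  ContinuousLinearMap.pi fun i => ContinuousLinearMap.proj (Fin.castLE (by norm_num) i)

lemma fderiv_form {n : ℕ} [NeZero n] (k j : Fin n) (x : (Fin n → ℝ)) :
    fderiv ℝ (fun y : Fin n → ℝ => (dxi k + y j • dxi 0 : (Fin n → ℝ) →L[ℝ] ℝ)) x
      = (dxi j).smulRight (dxi 0) := by
  have h : (fun y : Fin n → ℝ => (dxi k + y j • dxi 0 : (Fin n → ℝ) →L[ℝ] ℝ))
      = fun y => dxi k + ((dxi j).smulRight (dxi 0)) y := rfl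
  rw [h, fderiv_const_add]
  exact ((dxi j).smulRight (dxi 0)).fderiv

lemma expand4 (L : (Fin 4 → ℝ) →L[ℝ] ℝ) (w : Fin 4 → ℝ) :
    L w = w 0 * L (Pi.single 0 1) + w 1 * L (Pi.single 1 1) + w 2 * L (Pi.single 2 1)
      + w 3 * L (Pi.single 3 1) := by
  have hw : w = w 0 • (Pi.single 0 1 : Fin 4 → ℝ) + w 1 • (Pi.single 1 1 : Fin 4 → ℝ)
      + w 2 • (Pi.single 2 1 : Fin 4 → ℝ) + w 3 • (Pi.single 3 1 : Fin 4 → ℝ) := by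
    funext i; fin_cases i <;> simp [Pi.single_apply]
  conv_lhs => rw [hw]
  simp [smul_eq_mul]

section main

variable (A B C : (Fin 3 → ℝ) → ℝ) (D : (Fin 4 → ℝ) → ℝ)
  (hA : Differentiable ℝ A) (hB : Differentiable ℝ B) (hC : Differentiable ℝ C)
  (hD : Differentiable ℝ D) (E : (Fin 5 → ℝ) → ℝ)

local notation "ξ5" => (fun x => ![A (p53 x), B (p53 x), C (p53 x), D (p54 x), E x])
local notation "ξ4" => (fun x => ![A (p43 x), B (p43 x), C (p43 x), D x])

include hA hD in
lemma lie3 (x v : Fin 5 → ℝ) :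
    lieD ξ5 (cartan 2) x v
      = v 0 * (pd 0 D (p54 x) + x 4 * pd 0 A (p53 x) + E x)
      + v 1 * (pd 1 D (p54 x) + x 4 * pd 1 A (p53 x))
      + v 2 * (pd 2 D (p54 x) + x 4 * pd 2 A (p53 x))
      + v 3 * pd 3 D (p54 x) := by
  have hDc : DifferentiableAt ℝ (fun y : Fin 5 → ℝ => D (p54 y)) x :=
    (hD (p54 x)).comp x p54L.differentiableAt
  have hAc : DifferentiableAt ℝ (fun y : Fin 5 → ℝ => A (p53 y)) x :=
    (hA (p53 x)).comp x p53L.differentiableAt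
  have h4 : DifferentiableAt ℝ (fun y : Fin 5 → ℝ => y 4) x :=
    (dxi (4 : Fin 5)).differentiableAt
  have hfun : (fun y => cartan 2 y (ξ5 y)) = fun y : Fin 5 → ℝ => D (p54 y) + y 4 * A (p53 y) := rfl
  have e4 : fderiv ℝ (fun y : Fin 5 → ℝ => y 4) x v = v 4 := by
    rw [show (fun y : Fin 5 → ℝ => y 4) = ⇑(dxi (4 : Fin 5)) from rfl,
      ContinuousLinearMap.fderiv]; rfl
  have eD : fderiv ℝ (fun y : Fin 5 → ℝ => D (p54 y)) x v = fderiv ℝ D (p54 x) (p54 v) := by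
    rw [show (fun y : Fin 5 → ℝ => D (p54 y)) = D ∘ ⇑p54L from rfl,
      fderiv_comp (g := D) (f := ⇑p54L) x (hD (p54 x)) p54L.differentiableAt, p54L.fderiv]
    rfl
  have eA : fderiv ℝ (fun y : Fin 5 → ℝ => A (p53 y)) x v = fderiv ℝ A (p53 x) (p53 v) := by
    rw [show (fun y : Fin 5 → ℝ => A (p53 y)) = A ∘ ⇑p53L from rfl,
      fderiv_comp (g := A) (f := ⇑p53L) x (hA (p53 x)) p53L.differentiableAt, p53L.fderiv]
    rfl
  have emain : fderiv ℝ (fun y => cartan 2 y (ξ5 y)) x v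
      = fderiv ℝ D (p54 x) (p54 v) + (x 4 * fderiv ℝ A (p53 x) (p53 v) + A (p53 x) * v 4) := by
    rw [hfun, fderiv_fun_add hDc (h4.fun_mul hAc), ContinuousLinearMap.add_apply, eD,
      fderiv_fun_mul h4 hAc, ContinuousLinearMap.add_apply, ContinuousLinearMap.smul_apply,
      ContinuousLinearMap.smul_apply, eA, e4, smul_eq_mul, smul_eq_mul]
  have eform : (fderiv ℝ (cartan 2) x (ξ5 x)) v - (fderiv ℝ (cartan 2) x v) (ξ5 x)
      = E x * v 0 - v 4 * A (p53 x) := by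
    rw [show cartan 2 = fun y : Fin 5 → ℝ => (dxi 3 + y 4 • dxi 0 : (Fin 5 → ℝ) →L[ℝ] ℝ) from rfl,
      fderiv_form]
    rfl
  show fderiv ℝ (fun y => cartan 2 y (ξ5 y)) x v
      + ((fderiv ℝ (cartan 2) x (ξ5 x)) v - (fderiv ℝ (cartan 2) x v) (ξ5 x)) = _
  rw [emain, eform, expand4 (fderiv ℝ D (p54 x)) (p54 v), expand3 (fderiv ℝ A (p53 x)) (p53 v)]
  show v 0 * pd 0 D (p54 x) + v 1 * pd 1 D (p54 x) + v 2 * pd 2 D (p54 x) + v 3 * pd 3 D (p54 x)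
      + (x 4 * (v 0 * pd 0 A (p53 x) + v 1 * pd 1 A (p53 x) + v 2 * pd 2 A (p53 x))
        + A (p53 x) * v 4) + (E x * v 0 - v 4 * A (p53 x)) = _
  ring

include hA hB in
lemma lie1_s6 (x v : Fin 5 → ℝ) :
    lieD ξ5 (cartan 0) x v = lieD ξ4 (engel 0) (p54 x) (p54 v) := by
  have hg : DifferentiableAt ℝ (fun w => engel 0 w (ξ4 w)) (p54 x) := by
    show DifferentiableAt ℝ (fun w : Fin 4 → ℝ => B (p43 w) + w 2 * A (p43 w)) (p54 x)
    exact ((hB _).comp _ p43L.differentiableAt).add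
      (((dxi (2 : Fin 4)).differentiableAt).mul ((hA _).comp _ p43L.differentiableAt))
  have ea : fderiv ℝ (fun y => cartan 0 y (ξ5 y)) x v
      = fderiv ℝ (fun w => engel 0 w (ξ4 w)) (p54 x) (p54 v) := by
    rw [show (fun y => cartan 0 y (ξ5 y)) = (fun w => engel 0 w (ξ4 w)) ∘ ⇑p54L from rfl,
      fderiv_comp (g := fun w => engel 0 w (ξ4 w)) (f := ⇑p54L) x hg p54L.differentiableAt,
      p54L.fderiv]
    rfl
  have eb : (fderiv ℝ (cartan 0) x (ξ5 x)) v - (fderiv ℝ (cartan 0) x v) (ξ5 x)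
      = (fderiv ℝ (engel 0) (p54 x) (ξ4 (p54 x))) (p54 v)
        - (fderiv ℝ (engel 0) (p54 x) (p54 v)) (ξ4 (p54 x)) := by
    rw [show cartan 0 = fun y : Fin 5 → ℝ => (dxi 1 + y 2 • dxi 0 : (Fin 5 → ℝ) →L[ℝ] ℝ) from rfl,
      show engel 0 = fun w : Fin 4 → ℝ => (dxi 1 + w 2 • dxi 0 : (Fin 4 → ℝ) →L[ℝ] ℝ) from rfl,
      fderiv_form, fderiv_form]
    rfl
  show fderiv ℝ (fun y => cartan 0 y (ξ5 y)) x v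
      + ((fderiv ℝ (cartan 0) x (ξ5 x)) v - (fderiv ℝ (cartan 0) x v) (ξ5 x)) = _
  rw [ea, eb]
  rfl

include hA hC hD in
lemma lie2 (x v : Fin 5 → ℝ) :
    lieD ξ5 (cartan 1) x v = lieD ξ4 (engel 1) (p54 x) (p54 v) := by
  have hg : DifferentiableAt ℝ (fun w => engel 1 w (ξ4 w)) (p54 x) := by
    show DifferentiableAt ℝ (fun w : Fin 4 → ℝ => C (p43 w) + w 3 * A (p43 w)) (p54 x)
    exact ((hC _).comp _ p43L.differentiableAt).add
      (((dxi (3 : Fin 4)).differentiableAt).mul ((hA _).comp _ p43L.differentiableAt))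
  have ea : fderiv ℝ (fun y => cartan 1 y (ξ5 y)) x v
      = fderiv ℝ (fun w => engel 1 w (ξ4 w)) (p54 x) (p54 v) := by
    rw [show (fun y => cartan 1 y (ξ5 y)) = (fun w => engel 1 w (ξ4 w)) ∘ ⇑p54L from rfl,
      fderiv_comp (g := fun w => engel 1 w (ξ4 w)) (f := ⇑p54L) x hg p54L.differentiableAt,
      p54L.fderiv]
    rfl
  have eb : (fderiv ℝ (cartan 1) x (ξ5 x)) v - (fderiv ℝ (cartan 1) x v) (ξ5 x)
      = (fderiv ℝ (engel 1) (p54 x) (ξ4 (p54 x))) (p54 v)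
        - (fderiv ℝ (engel 1) (p54 x) (p54 v)) (ξ4 (p54 x)) := by
    rw [show cartan 1 = fun y : Fin 5 → ℝ => (dxi 2 + y 3 • dxi 0 : (Fin 5 → ℝ) →L[ℝ] ℝ) from rfl,
      show engel 1 = fun w : Fin 4 → ℝ => (dxi 2 + w 3 • dxi 0 : (Fin 4 → ℝ) →L[ℝ] ℝ) from rfl,
      fderiv_form, fderiv_form]
    rfl
  show fderiv ℝ (fun y => cartan 1 y (ξ5 y)) x v
      + ((fderiv ℝ (cartan 1) x (ξ5 x)) v - (fderiv ℝ (cartan 1) x v) (ξ5 x)) = _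
  rw [ea, eb]
  rfl

include hA hB hC hD in
lemma key (hIA : IsIA engel ξ4) :
    IsIA cartan ξ5 ↔
      ∀ x : Fin 5 → ℝ,
        E x = (pd 1 D (p54 x) + x 4 * pd 1 A (p53 x)) * x 2
            + (pd 2 D (p54 x) + x 4 * pd 2 A (p53 x)) * x 3
            + pd 3 D (p54 x) * x 4
            - (pd 0 D (p54 x) + x 4 * pd 0 A (p53 x)) := by
  constructor
  · intro h x
    obtain ⟨c, hc⟩ := h 2 x
    have hgen : ∀ v : Fin 5 → ℝ,
        v 0 * (pd 0 D (p54 x) + x 4 * pd 0 A (p53 x) + E x)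
          + v 1 * (pd 1 D (p54 x) + x 4 * pd 1 A (p53 x))
          + v 2 * (pd 2 D (p54 x) + x 4 * pd 2 A (p53 x))
          + v 3 * pd 3 D (p54 x)
        = c 0 * (v 1 + x 2 * v 0) + c 1 * (v 2 + x 3 * v 0) + c 2 * (v 3 + x 4 * v 0) := by
      intro v
      have h1 := hc v
      rw [lie3 A B C D hA hD E x v, Fin.sum_univ_three] at h1
      exact h1
    have h0 := hgen (Pi.single 0 1)
    have h1 := hgen (Pi.single 1 1)
    have h2 := hgen (Pi.single 2 1)
    have h3 := hgen (Pi.single 3 1)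
    simp [Pi.single_apply] at h0 h1 h2 h3
    linear_combination h0 - x 2 * h1 - x 3 * h2 - x 4 * h3
  · intro hE i x
    fin_cases i
    · obtain ⟨c, hc⟩ := hIA 0 (p54 x)
      refine ⟨![c 0, c 1, 0], fun v => ?_⟩
      rw [show (⟨0, by norm_num⟩ : Fin 3) = (0 : Fin 3) from rfl,
        lie1_s6 A B C D hA hB E x v, hc (p54 v), Fin.sum_univ_two, Fin.sum_univ_three]
      show c 0 * (v 1 + x 2 * v 0) + c 1 * (v 2 + x 3 * v 0)
        = c 0 * (v 1 + x 2 * v 0) + c 1 * (v 2 + x 3 * v 0) + 0 * (v 3 + x 4 * v 0)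
      ring
    · obtain ⟨c, hc⟩ := hIA 1 (p54 x)
      refine ⟨![c 0, c 1, 0], fun v => ?_⟩
      rw [show (⟨1, by norm_num⟩ : Fin 3) = (1 : Fin 3) from rfl,
        lie2 A B C D hA hC hD E x v, hc (p54 v), Fin.sum_univ_two, Fin.sum_univ_three]
      show c 0 * (v 1 + x 2 * v 0) + c 1 * (v 2 + x 3 * v 0)
        = c 0 * (v 1 + x 2 * v 0) + c 1 * (v 2 + x 3 * v 0) + 0 * (v 3 + x 4 * v 0)
      ring
    · refine ⟨![pd 1 D (p54 x) + x 4 * pd 1 A (p53 x),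
        pd 2 D (p54 x) + x 4 * pd 2 A (p53 x), pd 3 D (p54 x)], fun v => ?_⟩
      rw [show (⟨2, by norm_num⟩ : Fin 3) = (2 : Fin 3) from rfl,
        lie3 A B C D hA hD E x v, Fin.sum_univ_three]
      show _ = (pd 1 D (p54 x) + x 4 * pd 1 A (p53 x)) * (v 1 + x 2 * v 0)
        + (pd 2 D (p54 x) + x 4 * pd 2 A (p53 x)) * (v 2 + x 3 * v 0)
        + pd 3 D (p54 x) * (v 3 + x 4 * v 0)
      rw [hE x]
      ring

end main


/-- If `A∂₁ + B∂₂ + C∂₃ + D∂₄` is an infinitesimal automorphism of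
the Engel flag (with `A,B,C` functions of `(x¹,x²,x³)` and `D` of
`(x¹,x²,x³,x⁴)`), and `E : ℝ⁵ → ℝ` is smooth, then
`ξ = A∂₁ + B∂₂ + C∂₃ + D∂₄ + E∂₅` is an infinitesimal automorphism of the
homogeneous Cartan flag of length three iff
`E = (∂D/∂x² + x⁵∂A/∂x²)x³ + (∂D/∂x³ + x⁵∂A/∂x³)x⁴ + (∂D/∂x⁴)x⁵
   − (∂D/∂x¹ + x⁵∂A/∂x¹)`.  In particular the prolongation is unique. -/
theorem stmt6 (A B C : (Fin 3 → ℝ) → ℝ) (D : (Fin 4 → ℝ) → ℝ)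
    (hA : ContDiff ℝ (⊤ : ℕ∞) A) (hB : ContDiff ℝ (⊤ : ℕ∞) B) (hC : ContDiff ℝ (⊤ : ℕ∞) C)
    (hD : ContDiff ℝ (⊤ : ℕ∞) D)
    (hIA : IsIA engel (fun x => ![A (p43 x), B (p43 x), C (p43 x), D x]))
    (E : (Fin 5 → ℝ) → ℝ) (hE : ContDiff ℝ (⊤ : ℕ∞) E) :
    (IsIA cartan
        (fun x => ![A (p53 x), B (p53 x), C (p53 x), D (p54 x), E x]) ↔
      ∀ x : Fin 5 → ℝ,
        E x = (pd 1 D (p54 x) + x 4 * pd 1 A (p53 x)) * x 2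
            + (pd 2 D (p54 x) + x 4 * pd 2 A (p53 x)) * x 3
            + pd 3 D (p54 x) * x 4
            - (pd 0 D (p54 x) + x 4 * pd 0 A (p53 x)))
    ∧ (∃! E' : (Fin 5 → ℝ) → ℝ, ContDiff ℝ (⊤ : ℕ∞) E' ∧
        IsIA cartan
          (fun x => ![A (p53 x), B (p53 x), C (p53 x), D (p54 x), E' x])) := by
  have hA' := hA.differentiable (by simp)
  have hB' := hB.differentiable (by simp)
  have hC' := hC.differentiable (by simp)
  have hD' := hD.differentiable (by simp)
  refine ⟨key A B C D hA' hB' hC' hD' E hIA, ?_⟩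
  -- smoothness of the canonical prolongation
  set E₀ : (Fin 5 → ℝ) → ℝ := fun x =>
      (pd 1 D (p54 x) + x 4 * pd 1 A (p53 x)) * x 2
    + (pd 2 D (p54 x) + x 4 * pd 2 A (p53 x)) * x 3
    + pd 3 D (p54 x) * x 4
    - (pd 0 D (p54 x) + x 4 * pd 0 A (p53 x)) with hE₀
  have hpdD : ∀ i : Fin 4, ContDiff ℝ (⊤ : ℕ∞) (fun x : Fin 5 → ℝ => pd i D (p54 x)) := by
    intro i
    exact (((hD.fderiv_right (m := ((⊤ : ℕ∞) : WithTop ℕ∞)) (by exact_mod_cast le_top)).clm_apply contDiff_const).comp p54L.contDiff :)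
  have hpdA : ∀ i : Fin 3, ContDiff ℝ (⊤ : ℕ∞) (fun x : Fin 5 → ℝ => pd i A (p53 x)) := by
    intro i
    exact (((hA.fderiv_right (m := ((⊤ : ℕ∞) : WithTop ℕ∞)) (by exact_mod_cast le_top)).clm_apply contDiff_const).comp p53L.contDiff :)
  have hx : ∀ i : Fin 5, ContDiff ℝ (⊤ : ℕ∞) (fun x : Fin 5 → ℝ => x i) := fun i =>
    (dxi i).contDiff
  have hE₀s : ContDiff ℝ (⊤ : ℕ∞) E₀ := by
    have h1 : ContDiff ℝ (⊤ : ℕ∞) (fun x : Fin 5 → ℝ =>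
        (pd 1 D (p54 x) + x 4 * pd 1 A (p53 x)) * x 2) :=
      ((hpdD 1).add ((hx 4).mul (hpdA 1))).mul (hx 2)
    have h2 : ContDiff ℝ (⊤ : ℕ∞) (fun x : Fin 5 → ℝ =>
        (pd 2 D (p54 x) + x 4 * pd 2 A (p53 x)) * x 3) :=
      ((hpdD 2).add ((hx 4).mul (hpdA 2))).mul (hx 3)
    have h3 : ContDiff ℝ (⊤ : ℕ∞) (fun x : Fin 5 → ℝ => pd 3 D (p54 x) * x 4) :=
      (hpdD 3).mul (hx 4)
    have h0 : ContDiff ℝ (⊤ : ℕ∞) (fun x : Fin 5 → ℝ =>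
        pd 0 D (p54 x) + x 4 * pd 0 A (p53 x)) :=
      (hpdD 0).add ((hx 4).mul (hpdA 0))
    exact ((h1.add h2).add h3).sub h0
  refine ⟨E₀, ⟨hE₀s, (key A B C D hA' hB' hC' hD' E₀ hIA).2 (fun x => rfl)⟩, ?_⟩
  rintro E'' ⟨hE''s, hE''IA⟩
  funext x
  exact (key A B C D hA' hB' hC' hD' E'' hIA).1 hE''IA x
end
end

section
/- Let k ≥ 0 and let f : ℝ³ → ℝ be smooth. The vector field H⁻¹(f) has vanishing k-jet at the origin (i.e. H⁻¹(f) and all of its partial derivatives of order ≤ k vanish at 0) if and only if f_α(0) = 0 for every multi-index α = (α₁,α₂,α₃) with |α| ≤ k+1 and α ≠ (0,k+1,0). -/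
open scoped BigOperators

noncomputable section

/-- The iterated partial derivative `f_α = ∂^{|α|}f/(∂x¹)^{α₁}(∂x²)^{α₂}(∂x³)^{α₃}`
for a multi-index `α = (α₁,α₂,α₃)`. -/
def pdMulti (a : ℕ × ℕ × ℕ) (f : (Fin 3 → ℝ) → ℝ) : (Fin 3 → ℝ) → ℝ :=
  (pd 0)^[a.1] ((pd 1)^[a.2.1] ((pd 2)^[a.2.2] f))

/-- A map between finite-dimensional real spaces has vanishing `k`-jet at `0` :
it and all of its derivatives of order `≤ k` vanish at `0`. -/
def VanishingJet {E F : Type*} [NormedAddCommGroup E] [NormedSpace ℝ E]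
    [NormedAddCommGroup F] [NormedSpace ℝ F] (k : ℕ) (ξ : E → F) : Prop :=
  ∀ j : ℕ, j ≤ k → iteratedFDeriv ℝ j ξ 0 = 0

open scoped ContDiff

abbrev E3 := Fin 3 → ℝ

lemma one_le_inf : (∞ : WithTop ℕ∞) ≠ 0 := by simp
lemma two_le_inf : (2 : WithTop ℕ∞) ≤ ∞ := by norm_cast
lemma ContDiff.pd' {g : E3 → ℝ} (hg : ContDiff ℝ ∞ g) (i : Fin 3) :
    ContDiff ℝ ∞ (pd i g) :=
  (ContinuousLinearMap.apply ℝ ℝ (Pi.single i 1 : E3)).contDiff.comp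
    (hg.fderiv_right (by simp))
lemma fderiv_clm_comp' {F G : Type*} [NormedAddCommGroup F] [NormedSpace ℝ F]
    [NormedAddCommGroup G] [NormedSpace ℝ G]
    (L : F →L[ℝ] G) {h : E3 → F} {x : E3} (hh : DifferentiableAt ℝ h x) :
    fderiv ℝ (fun y => L (h y)) x = L.comp (fderiv ℝ h x) := by
  rw [show (fun y => L (h y)) = L ∘ h from rfl, fderiv_comp x L.differentiableAt hh, L.fderiv]

def dseq : List (Fin 3) → (E3 → ℝ) → (E3 → ℝ)
  | [], g => g
  | i :: l, g => pd i (dseq l g)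

lemma ContDiff.dseq' {g : E3 → ℝ} (hg : ContDiff ℝ ∞ g) (l : List (Fin 3)) :
    ContDiff ℝ ∞ (dseq l g) := by
  induction l with
  | nil => exact hg
  | cons i l ih => exact ih.pd' i

lemma itfd_fn {g : E3 → ℝ} (hg : ContDiff ℝ ∞ g) :
    ∀ (j : ℕ) (v : Fin j → Fin 3) (x : E3),
      iteratedFDeriv ℝ j g x (fun s => Pi.single (v s) 1) = dseq (List.ofFn v) g x := by
  intro j
  induction j generalizing g with
  | zero =>
    intro v x
    exact iteratedFDeriv_zero_apply _
  | succ j ih =>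
    intro v x
    have hdiff : DifferentiableAt ℝ (iteratedFDeriv ℝ j g) x :=
      (hg.differentiable_iteratedFDeriv (by exact_mod_cast ENat.coe_lt_top j)) x
    have step : iteratedFDeriv ℝ (j + 1) g x (fun s => Pi.single (v s) 1)
        = fderiv ℝ (iteratedFDeriv ℝ j g) x (Pi.single (v 0) 1)
            (fun s : Fin j => Pi.single (v s.succ) 1) := by
      rw [iteratedFDeriv_succ_apply_left]
      congr 1
    rw [step, List.ofFn_succ]
    have e2 : dseq (v 0 :: List.ofFn (fun s : Fin j => v s.succ)) g x
        = fderiv ℝ (fun y => (ContinuousMultilinearMap.apply ℝ (fun _ : Fin j => E3) ℝ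
            (fun s : Fin j => Pi.single (v s.succ) 1)) (iteratedFDeriv ℝ j g y)) x
            (Pi.single (v 0) 1) := by
      have hd : dseq (List.ofFn (fun s : Fin j => v s.succ)) g
          = fun y => iteratedFDeriv ℝ j g y (fun s : Fin j => Pi.single (v s.succ) 1) :=
        funext fun y => (ih hg (fun s => v s.succ) y).symm
      show fderiv ℝ (dseq (List.ofFn (fun s : Fin j => v s.succ)) g) x (Pi.single (v 0) 1) = _
      rw [hd]
      rfl
    rw [e2, fderiv_clm_comp' _ hdiff]
    rfl

lemma multilinear_ext_zero {j : ℕ} (M : ContinuousMultilinearMap ℝ (fun _ : Fin j => E3) ℝ)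
    (h : ∀ v : Fin j → Fin 3, M (fun s => Pi.single (v s) 1) = 0) : M = 0 := by
  apply ContinuousMultilinearMap.toMultilinearMap_injective
  apply Module.Basis.ext_multilinear (fun _ => Pi.basisFun ℝ (Fin 3))
  intro v
  have : ∀ i, (Pi.basisFun ℝ (Fin 3)) (v i) = (Pi.single (v i) 1 : E3) := by
    intro i; simp [Pi.basisFun_apply]
  simpa [this] using h v

lemma ContDiff.iterpd {g : E3 → ℝ} (hg : ContDiff ℝ ∞ g) (i : Fin 3) (n : ℕ) :
    ContDiff ℝ ∞ ((pd i)^[n] g) := by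
  induction n with
  | zero => exact hg
  | succ n ih => rw [Function.iterate_succ_apply']; exact ih.pd' i


lemma pd_pd_eq {g : E3 → ℝ} (hg : ContDiff ℝ ∞ g) (i j : Fin 3) (x : E3) :
    pd i (pd j g) x = fderiv ℝ (fderiv ℝ g) x (Pi.single i 1) (Pi.single j 1) := by
  have hdf : DifferentiableAt ℝ (fderiv ℝ g) x :=
    ((hg.fderiv_right (m := ∞) (by simp)).differentiable one_le_inf) x
  have h2 : pd i (pd j g) x
      = fderiv ℝ (fun y => (ContinuousLinearMap.apply ℝ ℝ (Pi.single j 1 : E3))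
          (fderiv ℝ g y)) x (Pi.single i 1) := rfl
  rw [h2, fderiv_clm_comp' _ hdf]
  rfl

lemma pd_comm' {g : E3 → ℝ} (hg : ContDiff ℝ ∞ g) (i j : Fin 3) :
    pd i (pd j g) = pd j (pd i g) := by
  funext x
  rw [pd_pd_eq hg, pd_pd_eq hg]
  exact (hg.contDiffAt.isSymmSndFDerivAt (by simpa using two_le_inf)) _ _

lemma pd_iterate_comm {g : E3 → ℝ} (hg : ContDiff ℝ ∞ g) (i j : Fin 3) (n : ℕ) :
    pd i ((pd j)^[n] g) = (pd j)^[n] (pd i g) := by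
  induction n with
  | zero => rfl
  | succ n ih =>
    rw [Function.iterate_succ_apply', pd_comm' (hg.iterpd j n), ih]
    exact (Function.iterate_succ_apply' (pd j) n (pd i g)).symm


lemma ContDiff.pdMulti' {g : E3 → ℝ} (hg : ContDiff ℝ ∞ g) (a : ℕ × ℕ × ℕ) :
    ContDiff ℝ ∞ (pdMulti a g) :=
  (((hg.iterpd 2 a.2.2).iterpd 1 a.2.1).iterpd 0 a.1)

lemma pd0_pdMulti {g : E3 → ℝ} (a b c : ℕ) :
    pd 0 (pdMulti (a, b, c) g) = pdMulti (a + 1, b, c) g :=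
  (Function.iterate_succ_apply' _ _ _).symm

lemma pd1_pdMulti {g : E3 → ℝ} (hg : ContDiff ℝ ∞ g) (a b c : ℕ) :
    pd 1 (pdMulti (a, b, c) g) = pdMulti (a, b + 1, c) g := by
  show pd 1 ((pd 0)^[a] ((pd 1)^[b] ((pd 2)^[c] g))) = (pd 0)^[a] ((pd 1)^[b+1] ((pd 2)^[c] g))
  rw [pd_iterate_comm ((hg.iterpd 2 c).iterpd 1 b) 1 0 a]
  exact congrArg _ (Function.iterate_succ_apply' (pd 1) b _).symm

lemma pd2_pdMulti {g : E3 → ℝ} (hg : ContDiff ℝ ∞ g) (a b c : ℕ) :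
    pd 2 (pdMulti (a, b, c) g) = pdMulti (a, b, c + 1) g := by
  show pd 2 ((pd 0)^[a] ((pd 1)^[b] ((pd 2)^[c] g))) = (pd 0)^[a] ((pd 1)^[b] ((pd 2)^[c+1] g))
  rw [pd_iterate_comm ((hg.iterpd 2 c).iterpd 1 b) 2 0 a,
    pd_iterate_comm (hg.iterpd 2 c) 2 1 b]
  exact congrArg _ (congrArg _ (Function.iterate_succ_apply' (pd 2) c _).symm)

lemma dseq_pdMulti {g : E3 → ℝ} (hg : ContDiff ℝ ∞ g) (l : List (Fin 3)) :
    dseq l g = pdMulti (l.count 0, l.count 1, l.count 2) g := by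
  induction l with
  | nil => rfl
  | cons i l ih =>
    show pd i (dseq l g) = _
    rw [ih]
    fin_cases i
    · show pd 0 _ = pdMulti (List.count 0 (0 :: l), List.count 1 (0 :: l), List.count 2 (0 :: l)) g
      rw [pd0_pdMulti]
      congr 1
      simp [List.count_cons]
    · show pd 1 _ = pdMulti (List.count 0 (1 :: l), List.count 1 (1 :: l), List.count 2 (1 :: l)) g
      rw [pd1_pdMulti hg]
      congr 1
      simp [List.count_cons]
    · show pd 2 _ = pdMulti (List.count 0 (2 :: l), List.count 1 (2 :: l), List.count 2 (2 :: l)) g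
      rw [pd2_pdMulti hg]
      congr 1
      simp [List.count_cons]

lemma count_sum_eq_length (l : List (Fin 3)) :
    l.count 0 + l.count 1 + l.count 2 = l.length := by
  induction l with
  | nil => rfl
  | cons i l ih =>
    fin_cases i <;> simp [List.count_cons] <;> omega

lemma dseq_append (l₁ l₂ : List (Fin 3)) (g : E3 → ℝ) :
    dseq (l₁ ++ l₂) g = dseq l₁ (dseq l₂ g) := by
  induction l₁ with
  | nil => rfl
  | cons i l ih => exact congrArg (pd i) ih

lemma dseq_replicate (n : ℕ) (i : Fin 3) (g : E3 → ℝ) :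
    dseq (List.replicate n i) g = (pd i)^[n] g := by
  induction n with
  | zero => rfl
  | succ n ih =>
    show pd i (dseq (List.replicate n i) g) = _
    rw [ih]
    exact (Function.iterate_succ_apply' (pd i) n g).symm

lemma vanish_iff_scalar {g : E3 → ℝ} (hg : ContDiff ℝ ∞ g) (k : ℕ) :
    (∀ j ≤ k, iteratedFDeriv ℝ j g 0 = 0) ↔
      ∀ a : ℕ × ℕ × ℕ, a.1 + a.2.1 + a.2.2 ≤ k → pdMulti a g 0 = 0 := by
  constructor
  · intro H a ha
    obtain ⟨a1, a2, a3⟩ := a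
    have ha' : a1 + a2 + a3 ≤ k := ha
    set l : List (Fin 3) :=
      List.replicate a1 0 ++ (List.replicate a2 1 ++ List.replicate a3 2) with hl
    have hlen : l.length = a1 + (a2 + a3) := by simp [hl]
    have hd : dseq l g = pdMulti (a1, a2, a3) g := by
      rw [hl, dseq_append, dseq_append, dseq_replicate, dseq_replicate, dseq_replicate]
      rfl
    have hv : dseq (List.ofFn (fun s : Fin l.length => l.get s)) g 0 = 0 := by
      rw [← itfd_fn hg l.length (fun s => l.get s) 0,
        H l.length (by omega)]
      rfl
    rw [List.ofFn_get] at hv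
    rw [← hd]
    exact hv
  · intro H j hj
    apply multilinear_ext_zero
    intro v
    rw [itfd_fn hg j v 0, dseq_pdMulti hg]
    apply H
    show List.count 0 (List.ofFn v) + List.count 1 (List.ofFn v) + List.count 2 (List.ofFn v) ≤ k
    have := count_sum_eq_length (List.ofFn v)
    simp only [List.length_ofFn] at this
    omega

lemma contDiff_coord2 : ContDiff ℝ ∞ (fun x : E3 => x 2) :=
  (ContinuousLinearMap.proj (R := ℝ) (φ := fun _ : Fin 3 => ℝ) 2).contDiff

lemma ContDiff.coordmul {u : E3 → ℝ} (hu : ContDiff ℝ ∞ u) :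
    ContDiff ℝ ∞ (fun x : E3 => x 2 * u x) := contDiff_coord2.mul hu

lemma pd_add {u v : E3 → ℝ} (hu : Differentiable ℝ u) (hv : Differentiable ℝ v) (i : Fin 3) :
    pd i (fun x => u x + v x) = fun x => pd i u x + pd i v x := by
  funext x
  show fderiv ℝ (fun y => u y + v y) x (Pi.single i 1) = _
  rw [fderiv_fun_add (hu x) (hv x)]
  rfl

lemma pd_const_mul {v : E3 → ℝ} (hv : Differentiable ℝ v) (c : ℝ) (i : Fin 3) :
    pd i (fun x => c * v x) = fun x => c * pd i v x := by
  funext x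
  show fderiv ℝ (fun y => c * v y) x (Pi.single i 1) = _
  rw [fderiv_const_mul (hv x) c]
  rfl

lemma pd_coordmul {u : E3 → ℝ} (hu : Differentiable ℝ u) (i : Fin 3) :
    pd i (fun x => x 2 * u x)
      = fun x => x 2 * pd i u x + (Pi.single i (1:ℝ) : E3) 2 * u x := by
  funext x
  show fderiv ℝ (fun y => y 2 * u y) x (Pi.single i 1) = _
  have h2 : DifferentiableAt ℝ (fun y : E3 => y 2) x :=
    (contDiff_coord2.differentiable one_le_inf) x
  rw [fderiv_fun_mul h2 (hu x)]
  have hproj : fderiv ℝ (fun y : E3 => y 2) x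
      = ContinuousLinearMap.proj (R := ℝ) (φ := fun _ : Fin 3 => ℝ) 2 :=
    (ContinuousLinearMap.proj (R := ℝ) (φ := fun _ : Fin 3 => ℝ) 2).fderiv
  rw [hproj]
  show x 2 * fderiv ℝ u x (Pi.single i 1) + u x * (Pi.single i (1:ℝ) : E3) 2 = _
  show _ = x 2 * fderiv ℝ u x (Pi.single i 1) + (Pi.single i (1:ℝ) : E3) 2 * u x
  ring

lemma iter_add {u v : E3 → ℝ} (hu : ContDiff ℝ ∞ u) (hv : ContDiff ℝ ∞ v) (i : Fin 3) (n : ℕ) :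
    (pd i)^[n] (fun x => u x + v x) = fun x => (pd i)^[n] u x + (pd i)^[n] v x := by
  induction n with
  | zero => rfl
  | succ n ih =>
    rw [Function.iterate_succ_apply', ih,
      pd_add ((hu.iterpd i n).differentiable one_le_inf)
        ((hv.iterpd i n).differentiable one_le_inf) i]
    funext x
    rw [Function.iterate_succ_apply', Function.iterate_succ_apply']

lemma iter_const_mul {v : E3 → ℝ} (hv : ContDiff ℝ ∞ v) (c : ℝ) (i : Fin 3) (n : ℕ) :
    (pd i)^[n] (fun x => c * v x) = fun x => c * (pd i)^[n] v x := by
  induction n with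
  | zero => rfl
  | succ n ih =>
    rw [Function.iterate_succ_apply', ih,
      pd_const_mul ((hv.iterpd i n).differentiable one_le_inf) c i]
    funext x
    rw [Function.iterate_succ_apply']

lemma iter_coordmul_ne {u : E3 → ℝ} (hu : ContDiff ℝ ∞ u) (i : Fin 3) (hi : i ≠ 2) (n : ℕ) :
    (pd i)^[n] (fun x => x 2 * u x) = fun x => x 2 * (pd i)^[n] u x := by
  induction n with
  | zero => rfl
  | succ n ih =>
    rw [Function.iterate_succ_apply', ih,
      pd_coordmul ((hu.iterpd i n).differentiable one_le_inf) i]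
    funext x
    rw [Function.iterate_succ_apply']
    rw [Pi.single_eq_of_ne (by simpa using hi.symm)]  -- (2 : Fin 3) ≠ i
    ring

lemma iter2_coordmul {u : E3 → ℝ} (hu : ContDiff ℝ ∞ u) (n : ℕ) :
    (pd 2)^[n + 1] (fun x => x 2 * u x)
      = fun x => x 2 * (pd 2)^[n + 1] u x + ((n : ℝ) + 1) * (pd 2)^[n] u x := by
  induction n with
  | zero =>
    rw [Function.iterate_succ_apply']
    show pd 2 (fun x => x 2 * u x) = _
    rw [pd_coordmul (hu.differentiable one_le_inf) 2]
    funext x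
    rw [Function.iterate_succ_apply']
    show x 2 * pd 2 u x + (Pi.single (2 : Fin 3) (1:ℝ) : E3) 2 * u x = _
    rw [Pi.single_eq_same]
    simp
  | succ n ih =>
    rw [Function.iterate_succ_apply', ih,
      pd_add ((contDiff_coord2.mul ((hu.iterpd 2 (n+1)))).differentiable one_le_inf)
        ((contDiff_const.mul (hu.iterpd 2 n)).differentiable one_le_inf) 2,
      pd_coordmul (((hu.iterpd 2 (n+1))).differentiable one_le_inf) 2,
      pd_const_mul ((hu.iterpd 2 n).differentiable one_le_inf) _ 2]
    funext x
    rw [Pi.single_eq_same]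
    rw [show pd 2 ((pd 2)^[n+1] u) = (pd 2)^[n+1+1] u from
        (Function.iterate_succ_apply' (pd 2) (n+1) u).symm,
      show pd 2 ((pd 2)^[n] u) = (pd 2)^[n+1] u from
        (Function.iterate_succ_apply' (pd 2) n u).symm]
    push_cast
    ring

lemma pdMulti_add {u v : E3 → ℝ} (hu : ContDiff ℝ ∞ u) (hv : ContDiff ℝ ∞ v) (a : ℕ × ℕ × ℕ) :
    pdMulti a (fun x => u x + v x) = fun x => pdMulti a u x + pdMulti a v x := by
  obtain ⟨a1, a2, a3⟩ := a
  show (pd 0)^[a1] ((pd 1)^[a2] ((pd 2)^[a3] (fun x => u x + v x))) = _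
  rw [iter_add hu hv 2 a3, iter_add (hu.iterpd 2 a3) (hv.iterpd 2 a3) 1 a2,
    iter_add ((hu.iterpd 2 a3).iterpd 1 a2) ((hv.iterpd 2 a3).iterpd 1 a2) 0 a1]
  rfl

lemma pdMulti_const_mul {v : E3 → ℝ} (hv : ContDiff ℝ ∞ v) (c : ℝ) (a : ℕ × ℕ × ℕ) :
    pdMulti a (fun x => c * v x) = fun x => c * pdMulti a v x := by
  obtain ⟨a1, a2, a3⟩ := a
  show (pd 0)^[a1] ((pd 1)^[a2] ((pd 2)^[a3] (fun x => c * v x))) = _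
  rw [iter_const_mul hv c 2 a3, iter_const_mul (hv.iterpd 2 a3) c 1 a2,
    iter_const_mul ((hv.iterpd 2 a3).iterpd 1 a2) c 0 a1]
  rfl

lemma pdMulti_sub {u v : E3 → ℝ} (hu : ContDiff ℝ ∞ u) (hv : ContDiff ℝ ∞ v) (a : ℕ × ℕ × ℕ) :
    pdMulti a (fun x => u x - v x) = fun x => pdMulti a u x - pdMulti a v x := by
  have h1 : (fun x => u x - v x) = fun x => u x + (-1 : ℝ) * v x := by funext x; ring
  rw [h1, pdMulti_add hu (contDiff_const.mul hv), pdMulti_const_mul hv (-1)]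
  funext x
  ring

lemma pdMulti_neg {v : E3 → ℝ} (hv : ContDiff ℝ ∞ v) (a : ℕ × ℕ × ℕ) :
    pdMulti a (fun x => -(v x)) = fun x => -(pdMulti a v x) := by
  have h1 : (fun x => -(v x)) = fun x => (-1 : ℝ) * v x := by funext x; ring
  rw [h1, pdMulti_const_mul hv (-1)]
  funext x
  ring

lemma pdMulti_coordmul_zero {u : E3 → ℝ} (hu : ContDiff ℝ ∞ u) (a1 a2 a3 : ℕ) :
    pdMulti (a1, a2, a3) (fun x => x 2 * u x) 0
      = (a3 : ℝ) * pdMulti (a1, a2, a3 - 1) u 0 := by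
  cases a3 with
  | zero =>
    show ((pd 0)^[a1] ((pd 1)^[a2] ((pd 2)^[0] (fun x => x 2 * u x)))) 0 = _
    rw [show ((pd 2)^[0] (fun x => x 2 * u x)) = (fun x => x 2 * u x) from rfl,
      iter_coordmul_ne hu 1 (by decide) a2,
      iter_coordmul_ne (hu.iterpd 1 a2) 0 (by decide) a1]
    simp
  | succ m =>
    show ((pd 0)^[a1] ((pd 1)^[a2] ((pd 2)^[m + 1] (fun x => x 2 * u x)))) 0 = _
    rw [iter2_coordmul hu m,
      iter_add (contDiff_coord2.mul (hu.iterpd 2 (m+1))) (contDiff_const.mul (hu.iterpd 2 m)) 1 a2,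
      iter_coordmul_ne (hu.iterpd 2 (m+1)) 1 (by decide) a2,
      iter_const_mul (hu.iterpd 2 m) _ 1 a2,
      iter_add (contDiff_coord2.mul ((hu.iterpd 2 (m+1)).iterpd 1 a2))
        (contDiff_const.mul ((hu.iterpd 2 m).iterpd 1 a2)) 0 a1,
      iter_coordmul_ne ((hu.iterpd 2 (m+1)).iterpd 1 a2) 0 (by decide) a1,
      iter_const_mul ((hu.iterpd 2 m).iterpd 1 a2) _ 0 a1]
    show (0 : E3) 2 * ((pd 0)^[a1] ((pd 1)^[a2] ((pd 2)^[m+1] u)) 0)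
        + ((m : ℝ) + 1) * ((pd 0)^[a1] ((pd 1)^[a2] ((pd 2)^[m] u)) 0)
      = ((m + 1 : ℕ) : ℝ) * pdMulti (a1, a2, m + 1 - 1) u 0
    show (0 : ℝ) * ((pd 0)^[a1] ((pd 1)^[a2] ((pd 2)^[m+1] u)) 0)
        + ((m : ℝ) + 1) * ((pd 0)^[a1] ((pd 1)^[a2] ((pd 2)^[m] u)) 0)
      = ((m + 1 : ℕ) : ℝ) * pdMulti (a1, a2, m + 1 - 1) u 0
    rw [show (m + 1 - 1 : ℕ) = m from rfl]
    show _ = ((m + 1 : ℕ) : ℝ) * ((pd 0)^[a1] ((pd 1)^[a2] ((pd 2)^[m] u)) 0)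
    push_cast
    ring

lemma pdMulti_pd0 {f : E3 → ℝ} (hf' : ContDiff ℝ ∞ f) (a1 a2 a3 : ℕ) :
    pdMulti (a1, a2, a3) (pd 0 f) = pdMulti (a1 + 1, a2, a3) f := by
  show (pd 0)^[a1] ((pd 1)^[a2] ((pd 2)^[a3] (pd 0 f))) = _
  rw [← pd_iterate_comm hf' 0 2 a3, ← pd_iterate_comm (hf'.iterpd 2 a3) 0 1 a2]
  rfl

lemma pdMulti_pd1 {f : E3 → ℝ} (hf' : ContDiff ℝ ∞ f) (a1 a2 a3 : ℕ) :
    pdMulti (a1, a2, a3) (pd 1 f) = pdMulti (a1, a2 + 1, a3) f := by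
  show (pd 0)^[a1] ((pd 1)^[a2] ((pd 2)^[a3] (pd 1 f))) = _
  rw [← pd_iterate_comm hf' 1 2 a3]
  rfl

lemma comp1_eval {f : E3 → ℝ} (hf' : ContDiff ℝ ∞ f) (a1 a2 a3 : ℕ) :
    pdMulti (a1, a2, a3) (fun x => f x - x 2 * pd 2 f x) 0
      = pdMulti (a1, a2, a3) f 0 - (a3 : ℝ) * pdMulti (a1, a2, (a3 - 1) + 1) f 0 := by
  have h := congrFun (pdMulti_sub hf' (hf'.pd' 2).coordmul (a1, a2, a3)) 0
  rw [h, pdMulti_coordmul_zero (hf'.pd' 2) a1 a2 a3]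
  rfl

lemma comp2_eval {f : E3 → ℝ} (hf' : ContDiff ℝ ∞ f) (a1 a2 a3 : ℕ) :
    pdMulti (a1, a2, a3) (fun x => -(pd 0 f x - x 2 * pd 1 f x)) 0
      = -(pdMulti (a1 + 1, a2, a3) f 0 - (a3 : ℝ) * pdMulti (a1, a2 + 1, a3 - 1) f 0) := by
  have h := congrFun (pdMulti_neg ((hf'.pd' 0).sub (hf'.pd' 1).coordmul) (a1, a2, a3)) 0
  rw [h]
  have h2 := congrFun (pdMulti_sub (hf'.pd' 0) (hf'.pd' 1).coordmul (a1, a2, a3)) 0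
  rw [h2, pdMulti_coordmul_zero (hf'.pd' 1) a1 a2 a3,
    pdMulti_pd0 hf' a1 a2 a3, pdMulti_pd1 hf' a1 a2 (a3 - 1)]

lemma itfd_comp_proj {ξ : E3 → (Fin 3 → ℝ)} (hξ : ContDiff ℝ ∞ ξ) (j : ℕ) (i : Fin 3)
    (m : Fin j → E3) :
    iteratedFDeriv ℝ j (fun x => ξ x i) 0 m = iteratedFDeriv ℝ j ξ 0 m i := by
  have h := ContinuousLinearMap.iteratedFDeriv_comp_left
    (ContinuousLinearMap.proj (R := ℝ) (φ := fun _ : Fin 3 => ℝ) i) (hξ.contDiffAt (x := (0 : E3)))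
    (i := j) (le_of_lt (by exact_mod_cast ENat.coe_lt_top j))
  rw [show (fun x => ξ x i)
      = (⇑(ContinuousLinearMap.proj (R := ℝ) (φ := fun _ : Fin 3 => ℝ) i) ∘ ξ) from rfl, h]
  rfl


lemma vanishing_components {ξ : E3 → (Fin 3 → ℝ)} (hξ : ContDiff ℝ ∞ ξ) (k : ℕ) :
    VanishingJet k ξ ↔ ∀ i : Fin 3, ∀ j ≤ k, iteratedFDeriv ℝ j (fun x => ξ x i) 0 = 0 := by
  constructor
  · intro H i j hj
    ext m
    rw [itfd_comp_proj hξ j i m, H j hj]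
    simp
  · intro H j hj
    ext m i
    rw [← itfd_comp_proj hξ j i m, H i j hj]
    simp


lemma ne_triple {a1 a2 a3 k : ℕ} (h : a1 + a2 + a3 ≤ k) : (a1, a2, a3) ≠ (0, k + 1, 0) := by
  intro h2
  obtain ⟨e1, e2, e3⟩ : a1 = 0 ∧ a2 = k + 1 ∧ a3 = 0 := by simpa [Prod.ext_iff] using h2
  omega

lemma ne_triple3 {a1 a2 a3 k : ℕ} (h : a3 ≠ 0) : (a1, a2, a3) ≠ (0, k + 1, 0) := by
  intro h2
  obtain ⟨e1, e2, e3⟩ : a1 = 0 ∧ a2 = k + 1 ∧ a3 = 0 := by simpa [Prod.ext_iff] using h2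
  omega

lemma ne_triple1 {a1 a2 a3 k : ℕ} (h : a1 ≠ 0) : (a1, a2, a3) ≠ (0, k + 1, 0) := by
  intro h2
  obtain ⟨e1, e2, e3⟩ : a1 = 0 ∧ a2 = k + 1 ∧ a3 = 0 := by simpa [Prod.ext_iff] using h2
  omega

/-- For smooth `f : ℝ³ → ℝ`, the Darboux infinitesimal automorphism
`H⁻¹(f)` has vanishing `k`-jet at the origin iff `f_α(0) = 0` for every
multi-index `α` with `|α| ≤ k+1` and `α ≠ (0,k+1,0)`. -/
theorem stmt8 (k : ℕ) (f : (Fin 3 → ℝ) → ℝ) (hf : ContDiff ℝ (⊤ : ℕ∞) f) :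
    VanishingJet k (Hinv f) ↔
      ∀ a : ℕ × ℕ × ℕ, a.1 + a.2.1 + a.2.2 ≤ k + 1 → a ≠ (0, k + 1, 0) →
        pdMulti a f 0 = 0 := by


  have hf' : ContDiff ℝ ∞ f := hf.of_le (by simp)
  have s0 : ContDiff ℝ ∞ (pd 2 f) := hf'.pd' 2
  have s1 : ContDiff ℝ ∞ (fun x : E3 => f x - x 2 * pd 2 f x) := hf'.sub (hf'.pd' 2).coordmul
  have s2 : ContDiff ℝ ∞ (fun x : E3 => -(pd 0 f x - x 2 * pd 1 f x)) :=
    ((hf'.pd' 0).sub (hf'.pd' 1).coordmul).neg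
  have hξ : ContDiff ℝ ∞ (Hinv f) := by
    apply contDiff_pi.mpr
    intro i
    fin_cases i
    · exact s0
    · exact s1
    · exact s2
  rw [vanishing_components hξ k]
  constructor
  · intro H a ha hne
    have Q0 := (vanish_iff_scalar s0 k).mp (H 0)
    have Q1 := (vanish_iff_scalar s1 k).mp (H 1)
    have Q2 := (vanish_iff_scalar s2 k).mp (H 2)
    obtain ⟨b1, b2, b3⟩ := a
    have ha' : b1 + b2 + b3 ≤ k + 1 := ha
    cases b3 with
    | succ m => exact Q0 (b1, b2, m) (show b1 + b2 + m ≤ k by omega)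
    | zero =>
      cases b1 with
      | succ m =>
        have h2 := Q2 (m, b2, 0) (show m + b2 + 0 ≤ k by omega)
        rw [comp2_eval hf' m b2 0, Nat.cast_zero, zero_mul, sub_zero, neg_eq_zero] at h2
        exact h2
      | zero =>
        have hb2 : b2 ≤ k := by
          by_contra h
          have hb : b2 = k + 1 := by omega
          exact hne (by rw [hb])
        have h1 := Q1 (0, b2, 0) (show 0 + b2 + 0 ≤ k by omega)
        rw [comp1_eval hf' 0 b2 0, Nat.cast_zero, zero_mul, sub_zero] at h1
        exact h1
  · intro P i j hj
    fin_cases i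
    · refine (vanish_iff_scalar s0 k).mpr ?_ j hj
      rintro ⟨a1, a2, a3⟩ ha
      have ha' : a1 + a2 + a3 ≤ k := ha
      exact P (a1, a2, a3 + 1) (show a1 + a2 + (a3 + 1) ≤ k + 1 by omega) (ne_triple3 (by omega))
    · refine (vanish_iff_scalar s1 k).mpr ?_ j hj
      rintro ⟨a1, a2, a3⟩ ha
      have ha' : a1 + a2 + a3 ≤ k := ha
      rw [comp1_eval hf' a1 a2 a3]
      have e1 : pdMulti (a1, a2, a3) f 0 = 0 := P _ (show a1 + a2 + a3 ≤ k + 1 by omega) (ne_triple ha')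
      have e2 : pdMulti (a1, a2, (a3 - 1) + 1) f 0 = 0 :=
        P _ (show a1 + a2 + ((a3 - 1) + 1) ≤ k + 1 by omega) (ne_triple3 (by omega))
      rw [e1, e2]
      ring
    · refine (vanish_iff_scalar s2 k).mpr ?_ j hj
      rintro ⟨a1, a2, a3⟩ ha
      have ha' : a1 + a2 + a3 ≤ k := ha
      rw [comp2_eval hf' a1 a2 a3]
      have e1 : pdMulti (a1 + 1, a2, a3) f 0 = 0 :=
        P _ (show (a1 + 1) + a2 + a3 ≤ k + 1 by omega) (ne_triple1 (by omega))
      rw [e1]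
      cases a3 with
      | zero => norm_num
      | succ m =>
        have e2 : pdMulti (a1, a2 + 1, m) f 0 = 0 :=
          P _ (show a1 + (a2 + 1) + m ≤ k + 1 by omega) (ne_triple (by omega))
        rw [show (m + 1 - 1 : ℕ) = m from rfl, e2]
        ring
end
end

section
/- Let k ≥ 0, let ξ = A ∂₁ + B ∂₂ + C ∂₃ + D ∂₄ be an infinitesimal automorphism of the Engel flag on ℝ⁴ (with A, B, C functions of (x¹,x²,x³)), and let pξ = ξ + E ∂₅ be its unique prolongation to an infinitesimal automorphism of the exceptional Cartan flag of length three on ℝ⁵, where E = x⁵·(η − ∂D/∂x⁴) with η = (∂A/∂x¹ + x⁵ ∂D/∂x¹) − x³(∂A/∂x² + x⁵ ∂D/∂x²) − x⁴(∂A/∂x³ + x⁵ ∂D/∂x³). Then pξ has vanishing k-jet at the origin of ℝ⁵ if and only if ξ has vanishing k-jet at the origin of ℝ⁴; that is, the k-th order isotropy of the exceptional Cartan flag coincides with the k-th order isotropy of the Engel flag. -/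
set_option maxHeartbeats 1600000


open scoped BigOperators

noncomputable section

/-- The exceptional Cartan flag of length three on `ℝ⁵`, generated by
`ϖ¹ = dx² + x³dx¹`, `ϖ² = dx³ + x⁴dx¹`, `ϖ³ = dx¹ + x⁵dx⁴`. -/
def cartanE : Fin 3 → (Fin 5 → ℝ) → (Fin 5 → ℝ) →L[ℝ] ℝ :=
  ![fun x => dxi 1 + x 2 • dxi 0, fun x => dxi 2 + x 3 • dxi 0,
    fun x => dxi 0 + x 4 • dxi 3]

namespace S11

/-- jets of order < m vanish at 0 -/
def J {E F : Type} [NormedAddCommGroup E] [NormedSpace ℝ E] [NormedAddCommGroup F]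
    [NormedSpace ℝ F] (m : ℕ) (f : E → F) : Prop :=
  ∀ j : ℕ, j < m → iteratedFDeriv ℝ j f 0 = 0

variable {E F G H : Type} [NormedAddCommGroup E] [NormedSpace ℝ E]
  [NormedAddCommGroup F] [NormedSpace ℝ F] [NormedAddCommGroup G] [NormedSpace ℝ G]
  [NormedAddCommGroup H] [NormedSpace ℝ H]

theorem J_comp_right (g : E →L[ℝ] F) {f : F → G} (hf : ContDiff ℝ (⊤ : ℕ∞) f) {m : ℕ}
    (h : J m f) : J m (fun x => f (g x)) := by
  intro j hj
  have h2 := g.iteratedFDeriv_comp_right hf (0 : E)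
    (by exact_mod_cast le_top : (j : WithTop ℕ∞) ≤ ((⊤ : ℕ∞) : WithTop ℕ∞))
  have h3 : iteratedFDeriv ℝ j (fun x => f (g x)) 0
      = (iteratedFDeriv ℝ j f (g 0)).compContinuousLinearMap fun _ => g := h2
  rw [h3, map_zero g, h j hj]
  ext v
  simp

theorem J_comp_left (g : G →L[ℝ] H) {f : E → G} (hf : ContDiff ℝ (⊤ : ℕ∞) f) {m : ℕ}
    (h : J m f) : J m (fun x => g (f x)) := by
  intro j hj
  have h2 := g.iteratedFDeriv_comp_left (hf.contDiffAt : ContDiffAt ℝ _ f (0 : E))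
    (by exact_mod_cast le_top : (j : WithTop ℕ∞) ≤ ((⊤ : ℕ∞) : WithTop ℕ∞))
  have h3 : iteratedFDeriv ℝ j (fun x => g (f x)) 0
      = g.compContinuousMultilinearMap (iteratedFDeriv ℝ j f 0) := h2
  rw [h3, h j hj]
  ext v
  simp

theorem J_fderiv {f : E → G} {m : ℕ} (h : J (m + 1) f) : J m (fderiv ℝ f) := by
  intro j hj
  have h2 : ‖iteratedFDeriv ℝ j (fderiv ℝ f) (0 : E)‖ = ‖iteratedFDeriv ℝ (j + 1) f 0‖ :=
    norm_iteratedFDeriv_fderiv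
  rw [h (j + 1) (by omega)] at h2
  simpa using h2

theorem J_add {f g : E → G} (hf : ContDiff ℝ (⊤ : ℕ∞) f) (hg : ContDiff ℝ (⊤ : ℕ∞) g) {m : ℕ}
    (h1 : J m f) (h2 : J m g) : J m (fun x => f x + g x) := by
  intro j hj
  rw [iteratedFDeriv_add_apply' (hf.of_le (by exact_mod_cast le_top)).contDiffAt
    (hg.of_le (by exact_mod_cast le_top)).contDiffAt, h1 j hj, h2 j hj, add_zero]

theorem J_neg {f : E → G} {m : ℕ} (h : J m f) : J m (fun x => -f x) := by
  intro j hj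
  have h2 : iteratedFDeriv ℝ j (-f) (0 : E) = -iteratedFDeriv ℝ j f 0 := iteratedFDeriv_neg_apply
  rw [show (fun x => -f x) = -f from rfl, h2, h j hj, neg_zero]

theorem J_sub {f g : E → G} (hf : ContDiff ℝ (⊤ : ℕ∞) f) (hg : ContDiff ℝ (⊤ : ℕ∞) g) {m : ℕ}
    (h1 : J m f) (h2 : J m g) : J m (fun x => f x - g x) := by
  have h3 := J_add hf hg.neg h1 (J_neg h2)
  simpa [sub_eq_add_neg] using h3

theorem J_bilin : ∀ (j : ℕ), ∀ {E F G H : Type}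
    [NormedAddCommGroup E] [NormedSpace ℝ E] [NormedAddCommGroup F] [NormedSpace ℝ F]
    [NormedAddCommGroup G] [NormedSpace ℝ G] [NormedAddCommGroup H] [NormedSpace ℝ H]
    (B : F →L[ℝ] G →L[ℝ] H) (f : E → F) (g : E → G) (a b : ℕ),
    ContDiff ℝ (⊤ : ℕ∞) f → ContDiff ℝ (⊤ : ℕ∞) g →
    (∀ i < a, iteratedFDeriv ℝ i f 0 = 0) → (∀ i < b, iteratedFDeriv ℝ i g 0 = 0) →
    j < a + b → iteratedFDeriv ℝ j (fun x => B (f x) (g x)) 0 = 0 := by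
  intro j
  induction j with
  | zero =>
    intro E F G H _ _ _ _ _ _ _ _ B f g a b hf hg h1 h2 hab
    ext v
    simp only [iteratedFDeriv_zero_apply, ContinuousMultilinearMap.zero_apply]
    rcases Nat.lt_or_ge 0 a with ha | ha
    · have hf0 : f 0 = 0 := by
        have h := h1 0 ha
        calc f 0 = iteratedFDeriv ℝ 0 f 0 v := (iteratedFDeriv_zero_apply v).symm
        _ = 0 := by rw [h]; rfl
      rw [hf0]; simp
    · have hb : 0 < b := by omega
      have hg0 : g 0 = 0 := by
        have h := h2 0 hb
        calc g 0 = iteratedFDeriv ℝ 0 g 0 v := (iteratedFDeriv_zero_apply v).symm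
        _ = 0 := by rw [h]; rfl
      rw [hg0]; simp
  | succ j IH =>
    intro E F G H _ _ _ _ _ _ _ _ B f g a b hf hg h1 h2 hab
    have hnorm : ‖iteratedFDeriv ℝ (j + 1) (fun x => B (f x) (g x)) 0‖
        = ‖iteratedFDeriv ℝ j (fderiv ℝ fun x => B (f x) (g x)) 0‖ :=
      norm_iteratedFDeriv_fderiv.symm
    rw [← norm_eq_zero, hnorm, norm_eq_zero]
    set B₁ : F →L[ℝ] (E →L[ℝ] G) →L[ℝ] (E →L[ℝ] H) :=
      (ContinuousLinearMap.compL ℝ E G H).comp B with hB₁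
    set B₂ : G →L[ℝ] (E →L[ℝ] F) →L[ℝ] (E →L[ℝ] H) :=
      (ContinuousLinearMap.compL ℝ E F H).comp B.flip with hB₂
    have hdf : ContDiff ℝ (⊤ : ℕ∞) (fderiv ℝ f) := hf.fderiv_right (by exact_mod_cast le_top)
    have hdg : ContDiff ℝ (⊤ : ℕ∞) (fderiv ℝ g) := hg.fderiv_right (by exact_mod_cast le_top)
    have hfd : (fderiv ℝ fun x => B (f x) (g x))
        = fun x => B₁ (f x) (fderiv ℝ g x) + B₂ (g x) (fderiv ℝ f x) := by
      funext x
      have hBf : HasFDerivAt (fun y => B (f y)) (B.comp (fderiv ℝ f x)) x :=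
        B.hasFDerivAt.comp x (hf.differentiable (by simp) x).hasFDerivAt
      have h := hBf.clm_apply (hg.differentiable (by simp) x).hasFDerivAt
      rw [h.fderiv]
      ext v
      simp [hB₁, hB₂, ContinuousLinearMap.compL]
    rw [hfd]
    have hc1 : ContDiff ℝ (⊤ : ℕ∞) (⇑B₁ ∘ f) := by fun_prop
    have hc2 : ContDiff ℝ (⊤ : ℕ∞) (⇑B₂ ∘ g) := by fun_prop
    have hc1' : ContDiff ℝ (⊤ : ℕ∞) (fun x => B₁ (f x)) := hc1
    have hc2' : ContDiff ℝ (⊤ : ℕ∞) (fun x => B₂ (g x)) := hc2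
    have hT1 : ContDiff ℝ (⊤ : ℕ∞) (fun x => B₁ (f x) (fderiv ℝ g x)) :=
      hc1'.clm_apply hdg
    have hT2 : ContDiff ℝ (⊤ : ℕ∞) (fun x => B₂ (g x) (fderiv ℝ f x)) :=
      hc2'.clm_apply hdf
    rw [iteratedFDeriv_add_apply' (hT1.of_le (by exact_mod_cast le_top)).contDiffAt
      (hT2.of_le (by exact_mod_cast le_top)).contDiffAt]
    rw [IH B₁ f (fderiv ℝ g) a (b - 1) hf hdg h1
        (fun i hi => J_fderiv (m := b - 1) (fun l hl => h2 l (by omega)) i hi) (by omega),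
      IH B₂ g (fderiv ℝ f) b (a - 1) hg hdf h2
        (fun i hi => J_fderiv (m := a - 1) (fun l hl => h1 l (by omega)) i hi) (by omega),
      add_zero]

theorem J_mul_left {c g : E → ℝ} (hc : ContDiff ℝ (⊤ : ℕ∞) c) (hg : ContDiff ℝ (⊤ : ℕ∞) g)
    {b : ℕ} (h2 : J b g) : J b (fun x => c x * g x) := by
  intro j hj
  have h := J_bilin j (ContinuousLinearMap.mul ℝ ℝ) c g 0 b hc hg
    (fun i hi => absurd hi (Nat.not_lt_zero i)) h2 (by omega)
  simpa using h

theorem J_mul_one {c g : E → ℝ} (hc : ContDiff ℝ (⊤ : ℕ∞) c) (hg : ContDiff ℝ (⊤ : ℕ∞) g)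
    {b : ℕ} (h1 : J 1 c) (h2 : J b g) : J (b + 1) (fun x => c x * g x) := by
  intro j hj
  have h := J_bilin j (ContinuousLinearMap.mul ℝ ℝ) c g 1 b hc hg h1 h2 (by omega)
  simpa using h

theorem J_one_coord {n : ℕ} (i : Fin n) : J 1 (fun x : Fin n → ℝ => x i) := by
  intro j hj
  obtain rfl : j = 0 := by omega
  ext v
  simp

def π43 : (Fin 4 → ℝ) →L[ℝ] (Fin 3 → ℝ) := .pi fun i => .proj (Fin.castLE (by norm_num) i)
def π53 : (Fin 5 → ℝ) →L[ℝ] (Fin 3 → ℝ) := .pi fun i => .proj (Fin.castLE (by norm_num) i)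
def π54 : (Fin 5 → ℝ) →L[ℝ] (Fin 4 → ℝ) := .pi fun i => .proj (Fin.castLE (by norm_num) i)
def ι34 : (Fin 3 → ℝ) →L[ℝ] (Fin 4 → ℝ) :=
  .pi fun i => if h : (i : ℕ) < 3 then .proj ⟨i.1, h⟩ else 0
def ι45 : (Fin 4 → ℝ) →L[ℝ] (Fin 5 → ℝ) :=
  .pi fun i => if h : (i : ℕ) < 4 then .proj ⟨i.1, h⟩ else 0
def ins (i : Fin 5) : ℝ →L[ℝ] (Fin 5 → ℝ) := .pi (Pi.single i (ContinuousLinearMap.id ℝ ℝ))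

theorem ι34_lt (x : Fin 3 → ℝ) (i : Fin 4) (h : (i : ℕ) < 3) : ι34 x i = x ⟨i.1, h⟩ := by
  simp only [ι34, ContinuousLinearMap.pi_apply]
  rw [dif_pos h]
  rfl

theorem ι45_lt (x : Fin 4 → ℝ) (i : Fin 5) (h : (i : ℕ) < 4) : ι45 x i = x ⟨i.1, h⟩ := by
  simp only [ι45, ContinuousLinearMap.pi_apply]
  rw [dif_pos h]
  rfl

theorem ins_eq (i : Fin 5) (c : ℝ) : ins i c = Pi.single i c := by
  funext j
  rcases eq_or_ne j i with h | h
  · subst h; simp [ins]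
  · simp [ins, Pi.single_eq_of_ne h, Pi.single_eq_of_ne (M := fun _ : Fin 5 => ℝ) h]

end S11

/-- Let `ξ = A∂₁ + B∂₂ + C∂₃ + D∂₄` be an infinitesimal
automorphism of the Engel flag and `pξ = ξ + E∂₅` its prolongation to the
exceptional Cartan flag of length three, where `E = x⁵(η − ∂D/∂x⁴)` with
`η = (∂A/∂x¹ + x⁵∂D/∂x¹) − x³(∂A/∂x² + x⁵∂D/∂x²) − x⁴(∂A/∂x³ + x⁵∂D/∂x³)`.
Then `pξ` has vanishing `k`-jet at the origin of `ℝ⁵` iff `ξ` has vanishing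
`k`-jet at the origin of `ℝ⁴` : the `k`-th order isotropy of the exceptional
Cartan flag coincides with that of the Engel flag. -/
theorem stmt11 (k : ℕ) (A B C : (Fin 3 → ℝ) → ℝ) (D : (Fin 4 → ℝ) → ℝ)
    (hA : ContDiff ℝ (⊤ : ℕ∞) A) (hB : ContDiff ℝ (⊤ : ℕ∞) B) (hC : ContDiff ℝ (⊤ : ℕ∞) C)
    (hD : ContDiff ℝ (⊤ : ℕ∞) D)
    (hIA : IsIA engel (fun x => ![A (p43 x), B (p43 x), C (p43 x), D x])) :
    VanishingJet k
        (fun x : Fin 5 → ℝ =>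
          ![A (p53 x), B (p53 x), C (p53 x), D (p54 x),
            x 4 * (((pd 0 A (p53 x) + x 4 * pd 0 D (p54 x))
              - x 2 * (pd 1 A (p53 x) + x 4 * pd 1 D (p54 x))
              - x 3 * (pd 2 A (p53 x) + x 4 * pd 2 D (p54 x)))
              - pd 3 D (p54 x))]) ↔
      VanishingJet k
        (fun x : Fin 4 → ℝ => ![A (p43 x), B (p43 x), C (p43 x), D x]) := by
  have hA' : ContDiff ℝ (⊤ : ℕ∞) A := hA.of_le (by simp)
  have hB' : ContDiff ℝ (⊤ : ℕ∞) B := hB.of_le (by simp)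
  have hC' : ContDiff ℝ (⊤ : ℕ∞) C := hC.of_le (by simp)
  have hD' : ContDiff ℝ (⊤ : ℕ∞) D := hD.of_le (by simp)
  clear hIA hA hB hC hD
  set ξ : (Fin 4 → ℝ) → (Fin 4 → ℝ) :=
    fun x => ![A (p43 x), B (p43 x), C (p43 x), D x] with hξdef
  set Ξ : (Fin 5 → ℝ) → (Fin 5 → ℝ) := fun x =>
    ![A (p53 x), B (p53 x), C (p53 x), D (p54 x),
      x 4 * (((pd 0 A (p53 x) + x 4 * pd 0 D (p54 x))
        - x 2 * (pd 1 A (p53 x) + x 4 * pd 1 D (p54 x))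
        - x 3 * (pd 2 A (p53 x) + x 4 * pd 2 D (p54 x)))
        - pd 3 D (p54 x))] with hΞdef
  -- smoothness of the pieces
  have hA43 : ContDiff ℝ (⊤ : ℕ∞) (fun x : Fin 4 → ℝ => A (p43 x)) := hA'.comp S11.π43.contDiff
  have hB43 : ContDiff ℝ (⊤ : ℕ∞) (fun x : Fin 4 → ℝ => B (p43 x)) := hB'.comp S11.π43.contDiff
  have hC43 : ContDiff ℝ (⊤ : ℕ∞) (fun x : Fin 4 → ℝ => C (p43 x)) := hC'.comp S11.π43.contDiff
  have hA53 : ContDiff ℝ (⊤ : ℕ∞) (fun x : Fin 5 → ℝ => A (p53 x)) := hA'.comp S11.π53.contDiff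
  have hB53 : ContDiff ℝ (⊤ : ℕ∞) (fun x : Fin 5 → ℝ => B (p53 x)) := hB'.comp S11.π53.contDiff
  have hC53 : ContDiff ℝ (⊤ : ℕ∞) (fun x : Fin 5 → ℝ => C (p53 x)) := hC'.comp S11.π53.contDiff
  have hD54 : ContDiff ℝ (⊤ : ℕ∞) (fun x : Fin 5 → ℝ => D (p54 x)) := hD'.comp S11.π54.contDiff
  have hfA : ContDiff ℝ (⊤ : ℕ∞) (fderiv ℝ A) := hA'.fderiv_right (by exact_mod_cast le_top)
  have hfD : ContDiff ℝ (⊤ : ℕ∞) (fderiv ℝ D) := hD'.fderiv_right (by exact_mod_cast le_top)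
  have hpdA : ∀ jj : Fin 3, ContDiff ℝ (⊤ : ℕ∞) (pd jj A) :=
    fun jj => hfA.clm_apply contDiff_const
  have hpdD : ∀ jj : Fin 4, ContDiff ℝ (⊤ : ℕ∞) (pd jj D) :=
    fun jj => hfD.clm_apply contDiff_const
  have hpdA5 : ∀ jj : Fin 3, ContDiff ℝ (⊤ : ℕ∞) (fun x : Fin 5 → ℝ => pd jj A (p53 x)) :=
    fun jj => (hpdA jj).comp S11.π53.contDiff
  have hpdD5 : ∀ jj : Fin 4, ContDiff ℝ (⊤ : ℕ∞) (fun x : Fin 5 → ℝ => pd jj D (p54 x)) :=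
    fun jj => (hpdD jj).comp S11.π54.contDiff
  have hco : ∀ i : Fin 5, ContDiff ℝ (⊤ : ℕ∞) (fun x : Fin 5 → ℝ => x i) :=
    fun i => (ContinuousLinearMap.proj (R := ℝ) (φ := fun _ : Fin 5 => ℝ) i).contDiff
  have sm0 : ContDiff ℝ (⊤ : ℕ∞)
      (fun x : Fin 5 → ℝ => pd 0 A (p53 x) + x 4 * pd 0 D (p54 x)) :=
    (hpdA5 0).add ((hco 4).mul (hpdD5 0))
  have sm1 : ContDiff ℝ (⊤ : ℕ∞)
      (fun x : Fin 5 → ℝ => x 2 * (pd 1 A (p53 x) + x 4 * pd 1 D (p54 x))) :=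
    (hco 2).mul ((hpdA5 1).add ((hco 4).mul (hpdD5 1)))
  have sm2 : ContDiff ℝ (⊤ : ℕ∞)
      (fun x : Fin 5 → ℝ => x 3 * (pd 2 A (p53 x) + x 4 * pd 2 D (p54 x))) :=
    (hco 3).mul ((hpdA5 2).add ((hco 4).mul (hpdD5 2)))
  have hbig : ContDiff ℝ (⊤ : ℕ∞) (fun x : Fin 5 → ℝ =>
      ((pd 0 A (p53 x) + x 4 * pd 0 D (p54 x))
        - x 2 * (pd 1 A (p53 x) + x 4 * pd 1 D (p54 x))
        - x 3 * (pd 2 A (p53 x) + x 4 * pd 2 D (p54 x)))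
        - pd 3 D (p54 x)) :=
    ((sm0.sub sm1).sub sm2).sub (hpdD5 3)
  have hE : ContDiff ℝ (⊤ : ℕ∞) (fun x : Fin 5 → ℝ =>
      x 4 * (((pd 0 A (p53 x) + x 4 * pd 0 D (p54 x))
        - x 2 * (pd 1 A (p53 x) + x 4 * pd 1 D (p54 x))
        - x 3 * (pd 2 A (p53 x) + x 4 * pd 2 D (p54 x)))
        - pd 3 D (p54 x))) := (hco 4).mul hbig
  have hΞs : ContDiff ℝ (⊤ : ℕ∞) Ξ := by
    rw [hΞdef]
    apply contDiff_pi.mpr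
    intro i
    fin_cases i
    · exact hA53
    · exact hB53
    · exact hC53
    · exact hD54
    · exact hE
  have hξs : ContDiff ℝ (⊤ : ℕ∞) ξ := by
    rw [hξdef]
    apply contDiff_pi.mpr
    intro i
    fin_cases i
    · exact hA43
    · exact hB43
    · exact hC43
    · exact hD'
  constructor
  · -- forward: vanishing jet upstairs implies vanishing jet downstairs
    intro h
    have hJ5 : S11.J (k + 1) Ξ := fun j hj => h j (by omega)
    have h1 : S11.J (k + 1) (fun x : Fin 4 → ℝ => Ξ (S11.ι45 x)) :=
      S11.J_comp_right _ hΞs hJ5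
    have h2 : S11.J (k + 1) (fun x : Fin 4 → ℝ => S11.π54 (Ξ (S11.ι45 x))) :=
      S11.J_comp_left _ (hΞs.comp S11.ι45.contDiff) h1
    have h53 : ∀ x : Fin 4 → ℝ, p53 (S11.ι45 x) = p43 x := by
      intro x
      funext i
      exact S11.ι45_lt x _ (Nat.lt_succ_of_lt i.isLt)
    have h54 : ∀ x : Fin 4 → ℝ, p54 (S11.ι45 x) = x := by
      intro x
      funext i
      have hh := S11.ι45_lt x (Fin.castLE (by norm_num) i) i.isLt
      simpa [p54] using hh
    have heq : (fun x : Fin 4 → ℝ => S11.π54 (Ξ (S11.ι45 x))) = ξ := by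
      rw [hΞdef, hξdef]
      funext x
      funext i
      fin_cases i
      · show A (p53 (S11.ι45 x)) = A (p43 x)
        rw [h53]
      · show B (p53 (S11.ι45 x)) = B (p43 x)
        rw [h53]
      · show C (p53 (S11.ι45 x)) = C (p43 x)
        rw [h53]
      · show D (p54 (S11.ι45 x)) = D x
        rw [h54]
    rw [heq] at h2
    exact fun j hj => h2 j (by omega)
  · -- backward: vanishing jet downstairs implies vanishing jet upstairs
    intro h
    have hJ4 : S11.J (k + 1) ξ := fun j hj => h j (by omega)
    have hJA4 : S11.J (k + 1) (fun x : Fin 4 → ℝ => A (p43 x)) :=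
      S11.J_comp_left (ContinuousLinearMap.proj (R := ℝ) (φ := fun _ : Fin 4 => ℝ) 0) hξs hJ4
    have hJB4 : S11.J (k + 1) (fun x : Fin 4 → ℝ => B (p43 x)) :=
      S11.J_comp_left (ContinuousLinearMap.proj (R := ℝ) (φ := fun _ : Fin 4 => ℝ) 1) hξs hJ4
    have hJC4 : S11.J (k + 1) (fun x : Fin 4 → ℝ => C (p43 x)) :=
      S11.J_comp_left (ContinuousLinearMap.proj (R := ℝ) (φ := fun _ : Fin 4 => ℝ) 2) hξs hJ4
    have hJD4 : S11.J (k + 1) D :=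
      S11.J_comp_left (ContinuousLinearMap.proj (R := ℝ) (φ := fun _ : Fin 4 => ℝ) 3) hξs hJ4
    have hJA3 : S11.J (k + 1) A := by
      have h0 : S11.J (k + 1) (fun x : Fin 3 → ℝ => A (p43 (S11.ι34 x))) :=
        S11.J_comp_right S11.ι34 hA43 hJA4
      have heq3 : (fun x : Fin 3 → ℝ => A (p43 (S11.ι34 x))) = A := by
        funext x
        congr 1
        funext i
        have hh := S11.ι34_lt x (Fin.castLE (by norm_num) i) i.isLt
        simpa [p43] using hh
      rwa [heq3] at h0
    have hJpdA5 : ∀ jj : Fin 3, S11.J k (fun x : Fin 5 → ℝ => pd jj A (p53 x)) := by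
      intro jj
      have h1 : S11.J k (fderiv ℝ A) := S11.J_fderiv hJA3
      have h2 : S11.J k (fun y : Fin 3 → ℝ => fderiv ℝ A y (Pi.single jj 1)) :=
        S11.J_comp_left (ContinuousLinearMap.apply ℝ ℝ (Pi.single jj 1)) hfA h1
      exact S11.J_comp_right S11.π53 (hpdA jj) h2
    have hJpdD5 : ∀ jj : Fin 4, S11.J k (fun x : Fin 5 → ℝ => pd jj D (p54 x)) := by
      intro jj
      have h1 : S11.J k (fderiv ℝ D) := S11.J_fderiv hJD4
      have h2 : S11.J k (fun y : Fin 4 → ℝ => fderiv ℝ D y (Pi.single jj 1)) :=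
        S11.J_comp_left (ContinuousLinearMap.apply ℝ ℝ (Pi.single jj 1)) hfD h1
      exact S11.J_comp_right S11.π54 (hpdD jj) h2
    have t0 : S11.J k (fun x : Fin 5 → ℝ => pd 0 A (p53 x) + x 4 * pd 0 D (p54 x)) :=
      S11.J_add (hpdA5 0) ((hco 4).mul (hpdD5 0)) (hJpdA5 0)
        (S11.J_mul_left (hco 4) (hpdD5 0) (hJpdD5 0))
    have t1 : S11.J k (fun x : Fin 5 → ℝ => x 2 * (pd 1 A (p53 x) + x 4 * pd 1 D (p54 x))) :=
      S11.J_mul_left (hco 2) ((hpdA5 1).add ((hco 4).mul (hpdD5 1)))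
        (S11.J_add (hpdA5 1) ((hco 4).mul (hpdD5 1)) (hJpdA5 1)
          (S11.J_mul_left (hco 4) (hpdD5 1) (hJpdD5 1)))
    have t2 : S11.J k (fun x : Fin 5 → ℝ => x 3 * (pd 2 A (p53 x) + x 4 * pd 2 D (p54 x))) :=
      S11.J_mul_left (hco 3) ((hpdA5 2).add ((hco 4).mul (hpdD5 2)))
        (S11.J_add (hpdA5 2) ((hco 4).mul (hpdD5 2)) (hJpdA5 2)
          (S11.J_mul_left (hco 4) (hpdD5 2) (hJpdD5 2)))
    have hJbig : S11.J k (fun x : Fin 5 → ℝ =>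
        ((pd 0 A (p53 x) + x 4 * pd 0 D (p54 x))
          - x 2 * (pd 1 A (p53 x) + x 4 * pd 1 D (p54 x))
          - x 3 * (pd 2 A (p53 x) + x 4 * pd 2 D (p54 x)))
          - pd 3 D (p54 x)) :=
      S11.J_sub ((sm0.sub sm1).sub sm2) (hpdD5 3)
        (S11.J_sub (sm0.sub sm1) sm2 (S11.J_sub sm0 sm1 t0 t1) t2) (hJpdD5 3)
    have hJE : S11.J (k + 1) (fun x : Fin 5 → ℝ =>
        x 4 * (((pd 0 A (p53 x) + x 4 * pd 0 D (p54 x))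
          - x 2 * (pd 1 A (p53 x) + x 4 * pd 1 D (p54 x))
          - x 3 * (pd 2 A (p53 x) + x 4 * pd 2 D (p54 x)))
          - pd 3 D (p54 x))) :=
      S11.J_mul_one (hco 4) hbig (S11.J_one_coord 4) hJbig
    have hJA5 : S11.J (k + 1) (fun x : Fin 5 → ℝ => A (p53 x)) :=
      S11.J_comp_right S11.π54 hA43 hJA4
    have hJB5 : S11.J (k + 1) (fun x : Fin 5 → ℝ => B (p53 x)) :=
      S11.J_comp_right S11.π54 hB43 hJB4
    have hJC5 : S11.J (k + 1) (fun x : Fin 5 → ℝ => C (p53 x)) :=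
      S11.J_comp_right S11.π54 hC43 hJC4
    have hJD5 : S11.J (k + 1) (fun x : Fin 5 → ℝ => D (p54 x)) :=
      S11.J_comp_right S11.π54 hD' hJD4
    have hsum : Ξ = fun x : Fin 5 → ℝ => ∑ i : Fin 5, S11.ins i (Ξ x i) := by
      funext x
      calc Ξ x = ∑ i, Pi.single i (Ξ x i) := (Finset.univ_sum_single (Ξ x)).symm
      _ = ∑ i : Fin 5, S11.ins i (Ξ x i) :=
        Finset.sum_congr rfl fun i _ => (S11.ins_eq i _).symm
    have hsm : ∀ i : Fin 5, ContDiff ℝ (⊤ : ℕ∞) (fun x : Fin 5 → ℝ => S11.ins i (Ξ x i)) := by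
      intro i
      rw [hΞdef]
      fin_cases i
      · exact (S11.ins 0).contDiff.comp hA53
      · exact (S11.ins 1).contDiff.comp hB53
      · exact (S11.ins 2).contDiff.comp hC53
      · exact (S11.ins 3).contDiff.comp hD54
      · exact (S11.ins 4).contDiff.comp hE
    have hΞJ : S11.J (k + 1) Ξ := by
      intro j hj
      rw [hsum]
      have hseq := congrFun (iteratedFDeriv_sum
        (𝕜 := ℝ) (f := fun (i : Fin 5) (x : Fin 5 → ℝ) => S11.ins i (Ξ x i))
        (u := Finset.univ) (i := j)
        (fun i _ => ((hsm i).of_le (by exact_mod_cast le_top)))) (0 : Fin 5 → ℝ)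
      rw [hseq, Finset.sum_apply]
      refine Finset.sum_eq_zero fun i _ => ?_
      rw [hΞdef]
      fin_cases i
      · exact S11.J_comp_left (S11.ins 0) hA53 hJA5 j hj
      · exact S11.J_comp_left (S11.ins 1) hB53 hJB5 j hj
      · exact S11.J_comp_left (S11.ins 2) hC53 hJC5 j hj
      · exact S11.J_comp_left (S11.ins 3) hD54 hJD5 j hj
      · exact S11.J_comp_left (S11.ins 4) hE hJE j hj
    exact fun j hj => hΞJ j (by omega)
end
end

section
/- Let U ⊆ ℝ⁵ be open and let φ = (y¹,…,y⁵) : U → ℝ⁵ be smooth with y¹, y², y³ independent of (x⁴,x⁵) and y⁴ independent of x⁵. The pullback φ*(dy¹ + y⁵dy⁴) lies, at every point of U, in the linear span of ϖ¹ = dx² + x³dx¹, ϖ² = dx³ + x⁴dx¹ and ϖ³ = dx¹ + x⁵dx⁴ if and only if the equation y⁵·∂y⁴/∂x⁴ = x⁵·[ ∂y¹/∂x¹ + y⁵·∂y⁴/∂x¹ − x³·(∂y¹/∂x² + y⁵·∂y⁴/∂x²) − x⁴·(∂y¹/∂x³ + y⁵·∂y⁴/∂x³) ] holds on U. Consequently,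 if moreover ∂y⁴/∂x⁴ never vanishes, then on the singular hyperplane {x⁵ = 0} one has y⁵ = 0 and all partial derivatives ∂y⁵/∂x^j with j ≠ 5 vanish. -/
open scoped BigOperators

noncomputable section

lemma fderiv_comp_proj' {φ : (Fin 5 → ℝ) → (Fin 5 → ℝ)} {x : Fin 5 → ℝ}
    (hd : DifferentiableAt ℝ φ x) (i : Fin 5) :
    fderiv ℝ (fun z => φ z i) x = (ContinuousLinearMap.proj i).comp (fderiv ℝ φ x) := by
  have := (((ContinuousLinearMap.proj i : (Fin 5 → ℝ) →L[ℝ] ℝ).hasFDerivAt).comp x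
    hd.hasFDerivAt).fderiv
  exact this

lemma clm_expand' (L : (Fin 5 → ℝ) →L[ℝ] (Fin 5 → ℝ)) (v : Fin 5 → ℝ) (i : Fin 5) :
    L v i = ∑ j, v j * L (Pi.single j 1) i := by
  have hv : v = ∑ j, v j • (Pi.single j 1 : Fin 5 → ℝ) := by
    funext k
    simp [Finset.sum_apply, Pi.single_apply]
  conv_lhs => rw [hv]
  simp [Finset.sum_apply]

lemma pd_diffAt' {U : Set (Fin 5 → ℝ)} (hU : IsOpen U) {φ : (Fin 5 → ℝ) → (Fin 5 → ℝ)}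
    (hφ : ContDiffOn ℝ (⊤ : ℕ∞) φ U) {x : Fin 5 → ℝ} (hx : x ∈ U) (j i : Fin 5) :
    DifferentiableAt ℝ (pd j (fun w => φ w i)) x := by
  have hout : pd j (fun w => φ w i) =ᶠ[nhds x] (fun z => fderiv ℝ φ z (Pi.single j 1) i) := by
    filter_upwards [hU.mem_nhds hx] with z hz
    have hd := (hφ.contDiffAt (hU.mem_nhds hz)).differentiableAt (by simp)
    show pd j (fun w => φ w i) z = _
    rw [pd, fderiv_comp_proj' hd]
    rfl
  rw [hout.differentiableAt_iff]
  have h1 : ContDiffAt ℝ (⊤ : ℕ∞) (fderiv ℝ φ) x :=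
    (hφ.contDiffAt (hU.mem_nhds hx)).fderiv_right (by simp)
  have h2 : DifferentiableAt ℝ (fun z => fderiv ℝ φ z (Pi.single j 1)) x :=
    (h1.differentiableAt (by simp)).clm_apply (differentiableAt_const _)
  exact (differentiableAt_pi.mp h2) i

/-- The right-hand side function of the PDE. -/
def Fq (φ : (Fin 5 → ℝ) → (Fin 5 → ℝ)) (z : Fin 5 → ℝ) : ℝ :=
  (pd 0 (fun w => φ w 0) z + φ z 4 * pd 0 (fun w => φ w 3) z)
    - z 2 * (pd 1 (fun w => φ w 0) z + φ z 4 * pd 1 (fun w => φ w 3) z)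
    - z 3 * (pd 2 (fun w => φ w 0) z + φ z 4 * pd 2 (fun w => φ w 3) z)


/-- For a smooth map `φ = (y¹,…,y⁵)` on an open `U ⊆ ℝ⁵` with
`y¹, y², y³` independent of `(x⁴,x⁵)` and `y⁴` independent of `x⁵`, the pullback
`φ*(dy¹ + y⁵dy⁴)` lies pointwise in the span of `ϖ¹ = dx² + x³dx¹`,
`ϖ² = dx³ + x⁴dx¹`, `ϖ³ = dx¹ + x⁵dx⁴` on `U` iff
`y⁵∂y⁴/∂x⁴ = x⁵[∂y¹/∂x¹ + y⁵∂y⁴/∂x¹ − x³(∂y¹/∂x² + y⁵∂y⁴/∂x²)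
 − x⁴(∂y¹/∂x³ + y⁵∂y⁴/∂x³)]` holds on `U`.  Consequently, if moreover
`∂y⁴/∂x⁴` never vanishes on `U`, then on the singular hyperplane `{x⁵ = 0}` one
has `y⁵ = 0` and all partials `∂y⁵/∂xʲ`, `j ≠ 5`, vanish. -/
theorem stmt15 (U : Set (Fin 5 → ℝ)) (hU : IsOpen U)
    (φ : (Fin 5 → ℝ) → (Fin 5 → ℝ)) (hφ : ContDiffOn ℝ (⊤ : ℕ∞) φ U)
    (hind : ∀ x ∈ U, ∀ i : Fin 5, i ≤ 2 →
      pd 3 (fun z => φ z i) x = 0 ∧ pd 4 (fun z => φ z i) x = 0)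
    (hind4 : ∀ x ∈ U, pd 4 (fun z => φ z 3) x = 0) :
    ((∀ x ∈ U, ∃ c₁ c₂ c₃ : ℝ, ∀ v : Fin 5 → ℝ,
        fderiv ℝ φ x v 0 + φ x 4 * fderiv ℝ φ x v 3 =
          c₁ * (v 1 + x 2 * v 0) + c₂ * (v 2 + x 3 * v 0) + c₃ * (v 0 + x 4 * v 3)) ↔
      (∀ x ∈ U,
        φ x 4 * pd 3 (fun z => φ z 3) x =
          x 4 * ((pd 0 (fun z => φ z 0) x + φ x 4 * pd 0 (fun z => φ z 3) x)
            - x 2 * (pd 1 (fun z => φ z 0) x + φ x 4 * pd 1 (fun z => φ z 3) x)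
            - x 3 * (pd 2 (fun z => φ z 0) x + φ x 4 * pd 2 (fun z => φ z 3) x))))
    ∧ ((∀ x ∈ U,
          φ x 4 * pd 3 (fun z => φ z 3) x =
            x 4 * ((pd 0 (fun z => φ z 0) x + φ x 4 * pd 0 (fun z => φ z 3) x)
              - x 2 * (pd 1 (fun z => φ z 0) x + φ x 4 * pd 1 (fun z => φ z 3) x)
              - x 3 * (pd 2 (fun z => φ z 0) x + φ x 4 * pd 2 (fun z => φ z 3) x))) →
        (∀ x ∈ U, pd 3 (fun z => φ z 3) x ≠ 0) →
        ∀ x ∈ U, x 4 = 0 →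
          φ x 4 = 0 ∧ ∀ j : Fin 5, j ≠ 4 → pd j (fun z => φ z 4) x = 0) := by
  have hdiff : ∀ x ∈ U, DifferentiableAt ℝ φ x := fun x hx =>
    (hφ.contDiffAt (hU.mem_nhds hx)).differentiableAt (by simp)
  have hpd : ∀ x ∈ U, ∀ i j : Fin 5,
      pd j (fun z => φ z i) x = fderiv ℝ φ x (Pi.single j 1) i := by
    intro x hx i j
    rw [pd, fderiv_comp_proj' (hdiff x hx)]
    rfl
  constructor
  · constructor
    · -- forward
      intro h x hx
      obtain ⟨c₁, c₂, c₃, hc⟩ := h x hx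
      have h0 := hc (Pi.single 0 1)
      have h1 := hc (Pi.single 1 1)
      have h2 := hc (Pi.single 2 1)
      have h3 := hc (Pi.single 3 1)
      simp [Pi.single_apply] at h0 h1 h2 h3
      have hz30 : fderiv ℝ φ x (Pi.single 3 1) 0 = 0 := by
        rw [← hpd x hx 0 3]; exact (hind x hx 0 (by decide)).1
      simp only [hpd x hx]
      linear_combination h3 - x 4 * h0 + x 4 * x 2 * h1 + x 4 * x 3 * h2 - hz30
    · -- backward
      intro h x hx
      have hPDE := h x hx
      simp only [hpd x hx] at hPDE
      have hz30 : fderiv ℝ φ x (Pi.single 3 1) 0 = 0 := by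
        rw [← hpd x hx 0 3]; exact (hind x hx 0 (by decide)).1
      have hz40 : fderiv ℝ φ x (Pi.single 4 1) 0 = 0 := by
        rw [← hpd x hx 0 4]; exact (hind x hx 0 (by decide)).2
      have hz43 : fderiv ℝ φ x (Pi.single 4 1) 3 = 0 := by
        rw [← hpd x hx 3 4]; exact hind4 x hx
      refine ⟨fderiv ℝ φ x (Pi.single 1 1) 0 + φ x 4 * fderiv ℝ φ x (Pi.single 1 1) 3,
        fderiv ℝ φ x (Pi.single 2 1) 0 + φ x 4 * fderiv ℝ φ x (Pi.single 2 1) 3,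
        (fderiv ℝ φ x (Pi.single 0 1) 0 + φ x 4 * fderiv ℝ φ x (Pi.single 0 1) 3)
          - x 2 * (fderiv ℝ φ x (Pi.single 1 1) 0 + φ x 4 * fderiv ℝ φ x (Pi.single 1 1) 3)
          - x 3 * (fderiv ℝ φ x (Pi.single 2 1) 0 + φ x 4 * fderiv ℝ φ x (Pi.single 2 1) 3),
        ?_⟩
      intro v
      rw [clm_expand' (fderiv ℝ φ x) v 0, clm_expand' (fderiv ℝ φ x) v 3,
        Fin.sum_univ_five, Fin.sum_univ_five]
      linear_combination v 3 * hPDE + v 3 * hz30 + v 4 * hz40 + v 4 * φ x 4 * hz43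
  · -- part 2
    intro hPDE hne x hx hx4
    have hmain := hPDE x hx
    have w0 : φ x 4 = 0 := by
      rw [hx4, zero_mul] at hmain
      rcases mul_eq_zero.mp hmain with h' | h'
      · exact h'
      · exact absurd h' (hne x hx)
    refine ⟨w0, ?_⟩
    intro j hj
    have d4 : DifferentiableAt ℝ (fun z => φ z 4) x := (differentiableAt_pi.mp (hdiff x hx)) 4
    have dcoord : ∀ i : Fin 5, DifferentiableAt ℝ (fun z : Fin 5 → ℝ => z i) x :=
      fun i => (differentiableAt_pi.mp differentiableAt_fun_id) i
    have hd33 : DifferentiableAt ℝ (pd 3 (fun w => φ w 3)) x := pd_diffAt' hU hφ hx 3 3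
    have hdF : DifferentiableAt ℝ (Fq φ) x := by
      unfold Fq
      exact (((pd_diffAt' hU hφ hx 0 0).add (d4.mul (pd_diffAt' hU hφ hx 0 3))).sub
        ((dcoord 2).mul ((pd_diffAt' hU hφ hx 1 0).add (d4.mul (pd_diffAt' hU hφ hx 1 3))))).sub
        ((dcoord 3).mul ((pd_diffAt' hU hφ hx 2 0).add (d4.mul (pd_diffAt' hU hφ hx 2 3))))
    have heq : (fun z => φ z 4 * pd 3 (fun w => φ w 3) z) =ᶠ[nhds x]
        (fun z => z 4 * Fq φ z) := by
      filter_upwards [hU.mem_nhds hx] with z hz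
      exact hPDE z hz
    have hL := heq.fderiv_eq (𝕜 := ℝ)
    have hL1 : fderiv ℝ (fun z => φ z 4 * pd 3 (fun w => φ w 3) z) x
        = φ x 4 • fderiv ℝ (pd 3 (fun w => φ w 3)) x
          + pd 3 (fun w => φ w 3) x • fderiv ℝ (fun z => φ z 4) x := fderiv_mul d4 hd33
    have hL2 : fderiv ℝ (fun z => z 4 * Fq φ z) x
        = x 4 • fderiv ℝ (Fq φ) x + Fq φ x • fderiv ℝ (fun z : Fin 5 → ℝ => z 4) x :=
      fderiv_mul (dcoord 4) hdF
    rw [hL1, hL2] at hL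
    have hLj := congrArg (fun T : (Fin 5 → ℝ) →L[ℝ] ℝ => T (Pi.single j 1)) hL
    simp only [ContinuousLinearMap.add_apply, ContinuousLinearMap.smul_apply,
      smul_eq_mul] at hLj
    have hproj : fderiv ℝ (fun z : Fin 5 → ℝ => z 4) x (Pi.single j 1) = 0 := by
      have he : fderiv ℝ (fun z : Fin 5 → ℝ => z 4) x
          = (ContinuousLinearMap.proj 4 : (Fin 5 → ℝ) →L[ℝ] ℝ) :=
        (ContinuousLinearMap.proj (4 : Fin 5) : (Fin 5 → ℝ) →L[ℝ] ℝ).fderiv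
      rw [he]
      show (Pi.single j 1 : Fin 5 → ℝ) 4 = 0
      rw [Pi.single_apply]
      simp [hj, Ne.symm hj]
    rw [w0, hx4, hproj] at hLj
    simp only [zero_mul, mul_zero, zero_add, add_zero] at hLj
    have hfinal : pd 3 (fun w => φ w 3) x * fderiv ℝ (fun z => φ z 4) x (Pi.single j 1) = 0 := hLj
    have := mul_eq_zero.mp hfinal
    rcases this with h' | h'
    · exact absurd h' (hne x hx)
    · exact h'
end
end

section
/- The homogeneous Cartan flag of length three and the exceptional Cartan flag of length three are not locally equivalent at the origin: there is no diffeomorphism φ between open neighborhoods U and V of 0 in ℝ⁵ with φ(0) = 0 such that, for every x ∈ U, the pullback by dφ_x of the span of ω¹(φ(x)), ω²(φ(x)), ω³(φ(x)) equals the span of ϖ¹(x), ϖ²(x), ϖ³(x), where {ω¹,ω²,ω³} = {dx²+x³dx¹, dx³+x⁴dx¹, dx⁴+x⁵dx¹} and {ϖ¹,ϖ²,ϖ³} = {dx²+x³dx¹, dx³+x⁴dx¹, dx¹+x⁵dx⁴}. -/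
open scoped BigOperators

noncomputable section

open Topology Filter

namespace S16

abbrev E5 := (Fin 5 → ℝ)

lemma eCE0 (x w : E5) : cartanE 0 x w = w 1 + x 2 * w 0 := by simp [cartanE, dxi]
lemma eCE1 (x w : E5) : cartanE 1 x w = w 2 + x 3 * w 0 := by simp [cartanE, dxi]
lemma eCE2 (x w : E5) : cartanE 2 x w = w 0 + x 4 * w 3 := by simp [cartanE, dxi]
lemma eC0 (y w : E5) : cartan 0 y w = w 1 + y 2 * w 0 := by simp [cartan, dxi]
lemma eC1 (y w : E5) : cartan 1 y w = w 2 + y 3 * w 0 := by simp [cartan, dxi]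
lemma eC2 (y w : E5) : cartan 2 y w = w 3 + y 4 * w 0 := by simp [cartan, dxi]

lemma hrep (x : E5) (lam : E5 →L[ℝ] ℝ)
    (h : lam ∈ Submodule.span ℝ ({cartanE 0 x, cartanE 1 x, cartanE 2 x} : Set (E5 →L[ℝ] ℝ))) :
    ∃ p q r : ℝ, lam = p • cartanE 0 x + q • cartanE 1 x + r • cartanE 2 x := by
  rw [show ({cartanE 0 x, cartanE 1 x, cartanE 2 x} : Set (E5 →L[ℝ] ℝ))
      = insert (cartanE 0 x) (insert (cartanE 1 x) {cartanE 2 x}) from rfl,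
    Submodule.mem_span_insert] at h
  obtain ⟨p, z, hz, rfl⟩ := h
  rw [Submodule.mem_span_insert] at hz
  obtain ⟨q, z', hz', rfl⟩ := hz
  rw [Submodule.mem_span_singleton] at hz'
  obtain ⟨r, rfl⟩ := hz'
  exact ⟨p, q, r, by abel⟩

/-- `gab a b w x = (dxⁱ_a + x_b dx_0)(φ x)(dφ_x w)`. -/
def gab (φ : E5 → E5) (a b : Fin 5) (w : E5) (x : E5) : ℝ :=
  fderiv ℝ φ x w a + φ x b * fderiv ℝ φ x w 0

def cc0 (φ : E5 → E5) (a b : Fin 5) (x : E5) : ℝ := gab φ a b (Pi.single 1 1) x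
def cc1 (φ : E5 → E5) (a b : Fin 5) (x : E5) : ℝ := gab φ a b (Pi.single 2 1) x
def cc2 (φ : E5 → E5) (a b : Fin 5) (x : E5) : ℝ :=
  gab φ a b (Pi.single 0 1) x - x 2 * cc0 φ a b x - x 3 * cc1 φ a b x

def Expand (φ : E5 → E5) (U : Set E5) (a b : Fin 5) : Prop :=
  ∀ x ∈ U, ∀ w : E5, gab φ a b w x =
    cc0 φ a b x * (w 1 + x 2 * w 0) + cc1 φ a b x * (w 2 + x 3 * w 0)
      + cc2 φ a b x * (w 0 + x 4 * w 3)

-- evaluation of Pi.single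
lemma sing_app (i j : Fin 5) : (Pi.single i 1 : E5) j = if j = i then 1 else 0 := by
  rcases eq_or_ne j i with h | h
  · subst h; simp
  · simp [Pi.single_eq_of_ne h, h]

lemma expand_of_mem_span (φ : E5 → E5) (x : E5) (i : Fin 3) (a b : Fin 5)
    (hab : ∀ w : E5, gab φ a b w x = (cartan i (φ x)).comp (fderiv ℝ φ x) w)
    (hmem : (cartan i (φ x)).comp (fderiv ℝ φ x) ∈
      Submodule.span ℝ ({cartanE 0 x, cartanE 1 x, cartanE 2 x} : Set (E5 →L[ℝ] ℝ))) :
    ∀ w : E5, gab φ a b w x =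
      cc0 φ a b x * (w 1 + x 2 * w 0) + cc1 φ a b x * (w 2 + x 3 * w 0)
        + cc2 φ a b x * (w 0 + x 4 * w 3) := by
  obtain ⟨p, q, r, hpqr⟩ := hrep x _ hmem
  have hev : ∀ w : E5, gab φ a b w x
      = p * (w 1 + x 2 * w 0) + q * (w 2 + x 3 * w 0) + r * (w 0 + x 4 * w 3) := by
    intro w
    rw [hab w, hpqr]
    simp only [ContinuousLinearMap.add_apply, ContinuousLinearMap.coe_smul',
      Pi.smul_apply, smul_eq_mul, ContinuousLinearMap.comp_apply, eCE0, eCE1, eCE2]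
  have h0 : cc0 φ a b x = p := by
    rw [cc0, hev (Pi.single 1 1)]; simp [sing_app]
  have h1 : cc1 φ a b x = q := by
    rw [cc1, hev (Pi.single 2 1)]; simp [sing_app]
  have h2 : cc2 φ a b x = r := by
    rw [cc2, h0, h1, hev (Pi.single 0 1)]; simp [sing_app]; ring
  intro w
  rw [h0, h1, h2, hev w]



lemma gab_eq0 (φ : E5 → E5) (x w : E5) :
    gab φ 1 2 w x = (cartan 0 (φ x)).comp (fderiv ℝ φ x) w := by
  simp [gab, eC0, ContinuousLinearMap.comp_apply]

lemma gab_eq1 (φ : E5 → E5) (x w : E5) :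
    gab φ 2 3 w x = (cartan 1 (φ x)).comp (fderiv ℝ φ x) w := by
  simp [gab, eC1, ContinuousLinearMap.comp_apply]

lemma gab_eq2 (φ : E5 → E5) (x w : E5) :
    gab φ 3 4 w x = (cartan 2 (φ x)).comp (fderiv ℝ φ x) w := by
  simp [gab, eC2, ContinuousLinearMap.comp_apply]

set_option maxHeartbeats 1000000 in
open ContinuousLinearMap in
/-- Master identity: the antisymmetrized derivative of the pulled-back form computed
two ways. -/
lemma master {U : Set E5} {φ : E5 → E5} (hU : IsOpen U) (hφ : ContDiffOn ℝ (⊤ : ℕ∞) φ U)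
    (a b : Fin 5)
    (hexp : Expand φ U a b)
    {x₀ : E5} (hx : x₀ ∈ U) (u w : E5) :
    fderiv ℝ φ x₀ u b * fderiv ℝ φ x₀ w 0 - fderiv ℝ φ x₀ w b * fderiv ℝ φ x₀ u 0
      = (fderiv ℝ (cc0 φ a b) x₀ u * (w 1 + x₀ 2 * w 0)
          - fderiv ℝ (cc0 φ a b) x₀ w * (u 1 + x₀ 2 * u 0))
        + (fderiv ℝ (cc1 φ a b) x₀ u * (w 2 + x₀ 3 * w 0)
          - fderiv ℝ (cc1 φ a b) x₀ w * (u 2 + x₀ 3 * u 0))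
        + (fderiv ℝ (cc2 φ a b) x₀ u * (w 0 + x₀ 4 * w 3)
          - fderiv ℝ (cc2 φ a b) x₀ w * (u 0 + x₀ 4 * u 3))
        + cc0 φ a b x₀ * (u 2 * w 0 - w 2 * u 0)
        + cc1 φ a b x₀ * (u 3 * w 0 - w 3 * u 0)
        + cc2 φ a b x₀ * (u 4 * w 3 - w 4 * u 3) := by
  have hUx : U ∈ 𝓝 x₀ := hU.mem_nhds hx
  have hφx : ContDiffAt ℝ (⊤ : ℕ∞) φ x₀ := hφ.contDiffAt hUx
  have hdφ : ∀ y ∈ U, HasFDerivAt φ (fderiv ℝ φ y) y := fun y hy =>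
    (((hφ.contDiffAt (hU.mem_nhds hy)).differentiableAt (by simp))).hasFDerivAt
  have hf2 : DifferentiableAt ℝ (fderiv ℝ φ) x₀ :=
    (hφx.fderiv_right (m := 1) (WithTop.coe_le_coe.mpr le_top)).differentiableAt one_ne_zero
  set Φ' := fderiv ℝ (fderiv ℝ φ) x₀ with hΦ'def
  have hΦ' : HasFDerivAt (fderiv ℝ φ) Φ' x₀ := hf2.hasFDerivAt
  have hsymm : ∀ p q : E5, Φ' p q = Φ' q p := by
    intro p q
    exact second_derivative_symmetric_of_eventually
      (Filter.eventually_of_mem hUx (fun y hy => hdφ y hy)) hΦ' p q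
  have hA : HasFDerivAt φ (fderiv ℝ φ x₀) x₀ := hdφ x₀ hx
  set A := fderiv ℝ φ x₀ with hAdef
  -- derivative of `x ↦ fderiv φ x v i`
  have hproj : ∀ (v : E5) (i : Fin 5),
      HasFDerivAt (fun x => fderiv ℝ φ x v i)
        (((proj i).comp (apply ℝ E5 v)).comp Φ') x₀ := by
    intro v i
    have := (((proj i).comp (apply ℝ E5 v)).hasFDerivAt).comp x₀ hΦ'
    simpa [Function.comp_def] using this
  have hcoord : ∀ (i : Fin 5), HasFDerivAt (fun x => φ x i) ((proj i).comp A) x₀ := by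
    intro i
    have := ((proj i).hasFDerivAt).comp x₀ hA
    simpa [Function.comp_def] using this
  -- derivative of gab
  have hgab : ∀ v : E5, HasFDerivAt (gab φ a b v)
      ((((proj a).comp (apply ℝ E5 v)).comp Φ')
        + ((φ x₀ b) • (((proj (0:Fin 5)).comp (apply ℝ E5 v)).comp Φ')
           + (A v 0) • ((proj b).comp A))) x₀ := by
    intro v
    exact (hproj v a).add ((hcoord b).mul (hproj v 0))
  -- derivatives of the coefficient functions
  have hcc0 : HasFDerivAt (cc0 φ a b) (fderiv ℝ (cc0 φ a b) x₀) x₀ :=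
    ((hgab (Pi.single 1 1)).differentiableAt).hasFDerivAt
  have hcc1 : HasFDerivAt (cc1 φ a b) (fderiv ℝ (cc1 φ a b) x₀) x₀ :=
    ((hgab (Pi.single 2 1)).differentiableAt).hasFDerivAt
  have hxc2 : DifferentiableAt ℝ (fun y : E5 => y 2) x₀ :=
    (proj (2 : Fin 5) : E5 →L[ℝ] ℝ).differentiableAt
  have hxc3 : DifferentiableAt ℝ (fun y : E5 => y 3) x₀ :=
    (proj (3 : Fin 5) : E5 →L[ℝ] ℝ).differentiableAt
  have hcc2 : HasFDerivAt (cc2 φ a b) (fderiv ℝ (cc2 φ a b) x₀) x₀ := by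
    have : DifferentiableAt ℝ (cc2 φ a b) x₀ := by
      apply DifferentiableAt.sub
      apply DifferentiableAt.sub
      · exact (hgab (Pi.single 0 1)).differentiableAt
      · exact hxc2.mul (hgab (Pi.single 1 1)).differentiableAt
      · exact hxc3.mul (hgab (Pi.single 2 1)).differentiableAt
    exact this.hasFDerivAt
  -- derivative of the right-hand side of the expansion
  have hRHS : ∀ v : E5, HasFDerivAt
      (fun x => cc0 φ a b x * (v 1 + x 2 * v 0) + cc1 φ a b x * (v 2 + x 3 * v 0)
        + cc2 φ a b x * (v 0 + x 4 * v 3))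
      ((cc0 φ a b x₀ • ((v 0) • (proj (2:Fin 5) : E5 →L[ℝ] ℝ))
          + (v 1 + x₀ 2 * v 0) • fderiv ℝ (cc0 φ a b) x₀)
        + (cc1 φ a b x₀ • ((v 0) • (proj (3:Fin 5) : E5 →L[ℝ] ℝ))
          + (v 2 + x₀ 3 * v 0) • fderiv ℝ (cc1 φ a b) x₀)
        + (cc2 φ a b x₀ • ((v 3) • (proj (4:Fin 5) : E5 →L[ℝ] ℝ))
          + (v 0 + x₀ 4 * v 3) • fderiv ℝ (cc2 φ a b) x₀)) x₀ := by
    intro v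
    have haff : ∀ (i : Fin 5) (c d : ℝ), HasFDerivAt (fun x : E5 => c + x i * d)
        (d • (proj i : E5 →L[ℝ] ℝ)) x₀ := by
      intro i c d
      have h1 : HasFDerivAt (fun x : E5 => x i) (proj i : E5 →L[ℝ] ℝ) x₀ :=
        (proj i : E5 →L[ℝ] ℝ).hasFDerivAt
      have := (h1.mul_const d).const_add c
      simpa using this
    exact ((hcc0.mul (haff 2 (v 1) (v 0))).add (hcc1.mul (haff 3 (v 2) (v 0)))).add
      (hcc2.mul (haff 4 (v 0) (v 3)))
  -- the two derivatives agree
  have hkey : ∀ v z : E5,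
      (Φ' z v a + (φ x₀ b * (Φ' z v 0) + A v 0 * (A z b)))
      = (cc0 φ a b x₀ * (v 0 * z 2) + (v 1 + x₀ 2 * v 0) * fderiv ℝ (cc0 φ a b) x₀ z)
        + (cc1 φ a b x₀ * (v 0 * z 3) + (v 2 + x₀ 3 * v 0) * fderiv ℝ (cc1 φ a b) x₀ z)
        + (cc2 φ a b x₀ * (v 3 * z 4) + (v 0 + x₀ 4 * v 3) * fderiv ℝ (cc2 φ a b) x₀ z) := by
    intro v z
    have heq : (fun x => gab φ a b v x) =ᶠ[𝓝 x₀] (fun x =>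
        cc0 φ a b x * (v 1 + x 2 * v 0) + cc1 φ a b x * (v 2 + x 3 * v 0)
          + cc2 φ a b x * (v 0 + x 4 * v 3)) :=
      Filter.eventually_of_mem hUx (fun y hy => hexp y hy v)
    have h2 : HasFDerivAt (fun x =>
        cc0 φ a b x * (v 1 + x 2 * v 0) + cc1 φ a b x * (v 2 + x 3 * v 0)
          + cc2 φ a b x * (v 0 + x 4 * v 3))
        ((((proj a).comp (apply ℝ E5 v)).comp Φ')
        + ((φ x₀ b) • (((proj (0:Fin 5)).comp (apply ℝ E5 v)).comp Φ')
           + (A v 0) • ((proj b).comp A))) x₀ :=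
      (hgab v).congr_of_eventuallyEq heq.symm
    have := (hRHS v).unique h2
    have happ := congrArg (fun (L : E5 →L[ℝ] ℝ) => L z) this
    simpa [ContinuousLinearMap.add_apply, ContinuousLinearMap.smul_apply,
      ContinuousLinearMap.comp_apply, ContinuousLinearMap.proj_apply,
      ContinuousLinearMap.apply_apply, mul_comm, mul_left_comm] using happ.symm
  have k1 := hkey w u
  have k2 := hkey u w
  have hs1 : Φ' u w a = Φ' w u a := by rw [hsymm u w]
  have hs0 : Φ' u w 0 = Φ' w u 0 := by rw [hsymm u w]
  linear_combination k1 - k2 - hs1 - (φ x₀ b) * hs0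


def eta (x : E5) : E5 := ![-(x 4), x 2 * x 4, x 3 * x 4, 1, 0]

def zeta (x : E5) : E5 := ![1, -(x 2), -(x 3), 0, 0]

@[simp] lemma eta0 (x : E5) : eta x 0 = -(x 4) := rfl
@[simp] lemma eta1 (x : E5) : eta x 1 = x 2 * x 4 := rfl
@[simp] lemma eta2 (x : E5) : eta x 2 = x 3 * x 4 := rfl
@[simp] lemma eta3 (x : E5) : eta x 3 = 1 := rfl
@[simp] lemma eta4 (x : E5) : eta x 4 = 0 := rfl
@[simp] lemma zeta0 (x : E5) : zeta x 0 = 1 := rfl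
@[simp] lemma zeta1 (x : E5) : zeta x 1 = -(x 2) := rfl
@[simp] lemma zeta2 (x : E5) : zeta x 2 = -(x 3) := rfl
@[simp] lemma zeta3 (x : E5) : zeta x 3 = 0 := rfl
@[simp] lemma zeta4 (x : E5) : zeta x 4 = 0 := rfl

/-- kernel identity : `gab a b (eta x) x = 0`. -/
lemma ker_eta {U : Set E5} {φ : E5 → E5} {a b : Fin 5} (hexp : Expand φ U a b)
    {x : E5} (hx : x ∈ U) : gab φ a b (eta x) x = 0 := by
  rw [hexp x hx (eta x)]
  simp only [eta0, eta1, eta2, eta3, eta4]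
  ring

lemma ker_e4 {U : Set E5} {φ : E5 → E5} {a b : Fin 5} (hexp : Expand φ U a b)
    {x : E5} (hx : x ∈ U) : gab φ a b (Pi.single 4 1) x = 0 := by
  rw [hexp x hx (Pi.single 4 1)]
  simp [sing_app]

/-- Level 1 : the second derived system corresponds;
`cc2` vanishes for the first two systems. -/
lemma level1 {U : Set E5} {φ : E5 → E5} (hU : IsOpen U) (hφ : ContDiffOn ℝ (⊤ : ℕ∞) φ U)
    (h12 : Expand φ U 1 2) (h23 : Expand φ U 2 3) (h34 : Expand φ U 3 4)
    {x : E5} (hx : x ∈ U) : cc2 φ 1 2 x = 0 ∧ cc2 φ 2 3 x = 0 := by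
  have hu23 : fderiv ℝ φ x (eta x) 2 + φ x 3 * fderiv ℝ φ x (eta x) 0 = 0 := ker_eta h23 hx
  have hu34 : fderiv ℝ φ x (eta x) 3 + φ x 4 * fderiv ℝ φ x (eta x) 0 = 0 := ker_eta h34 hx
  have hw23 : fderiv ℝ φ x (Pi.single 4 1) 2
      + φ x 3 * fderiv ℝ φ x (Pi.single 4 1) 0 = 0 := ker_e4 h23 hx
  have hw34 : fderiv ℝ φ x (Pi.single 4 1) 3
      + φ x 4 * fderiv ℝ φ x (Pi.single 4 1) 0 = 0 := ker_e4 h34 hx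
  constructor
  · have M := master hU hφ 1 2 h12 hx (eta x) (Pi.single 4 1)
    simp only [eta0, eta1, eta2, eta3, eta4, sing_app] at M
    simp at M
    linear_combination M - (fderiv ℝ φ x (Pi.single 4 1) 0) * hu23
      + (fderiv ℝ φ x (eta x) 0) * hw23
  · have M := master hU hφ 2 3 h23 hx (eta x) (Pi.single 4 1)
    simp only [eta0, eta1, eta2, eta3, eta4, sing_app] at M
    simp at M
    linear_combination M - (fderiv ℝ φ x (Pi.single 4 1) 0) * hu34
      + (fderiv ℝ φ x (eta x) 0) * hw34

lemma ker_zeta {U : Set E5} {φ : E5 → E5} (h23 : Expand φ U 2 3)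
    {x : E5} (hx : x ∈ U) (hc : cc2 φ 2 3 x = 0) : gab φ 2 3 (zeta x) x = 0 := by
  rw [h23 x hx (zeta x)]
  simp only [zeta0, zeta1, zeta2, zeta3, zeta4]
  linear_combination hc

/-- Level 2 : the third derived system corresponds; `cc1` vanishes for the first system. -/
lemma level2 {U : Set E5} {φ : E5 → E5} (hU : IsOpen U) (hφ : ContDiffOn ℝ (⊤ : ℕ∞) φ U)
    (h12 : Expand φ U 1 2) (h23 : Expand φ U 2 3) (h34 : Expand φ U 3 4)
    {x : E5} (hx : x ∈ U) : cc1 φ 1 2 x = 0 := by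
  have hfd2 : fderiv ℝ (cc2 φ 1 2) x = 0 := by
    have hz : cc2 φ 1 2 =ᶠ[𝓝 x] (fun _ => (0:ℝ)) :=
      Filter.eventually_of_mem (hU.mem_nhds hx)
        (fun y hy => (level1 hU hφ h12 h23 h34 hy).1)
    rw [hz.fderiv_eq]
    exact fderiv_const_apply 0
  have hfd2w : fderiv ℝ (cc2 φ 1 2) x (eta x) = 0 := by rw [hfd2]; rfl
  have hu23 : fderiv ℝ φ x (zeta x) 2 + φ x 3 * fderiv ℝ φ x (zeta x) 0 = 0 :=
    ker_zeta h23 hx (level1 hU hφ h12 h23 h34 hx).2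
  have hw23 : fderiv ℝ φ x (eta x) 2 + φ x 3 * fderiv ℝ φ x (eta x) 0 = 0 := ker_eta h23 hx
  have hc2 : cc2 φ 1 2 x = 0 := (level1 hU hφ h12 h23 h34 hx).1
  have M := master hU hφ 1 2 h12 hx (zeta x) (eta x)
  simp only [eta0, eta1, eta2, eta3, eta4, zeta0, zeta1, zeta2, zeta3, zeta4] at M
  linear_combination M - (fderiv ℝ φ x (eta x) 0) * hu23
    + (fderiv ℝ φ x (zeta x) 0) * hw23 - hfd2w - (x 4 * 1 - 1 * 0) * hc2 + x 4 * hc2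

end S16

open S16 Topology

/-- The homogeneous and the exceptional Cartan flags of length three
are not locally equivalent at the origin: there is no diffeomorphism `φ` between
open neighborhoods `U`, `V` of `0` in `ℝ⁵` with `φ 0 = 0` such that, for every
`x ∈ U`, the pullback by `dφ_x` (i.e. the transpose of `dφ_x`) of the span of the
`ωⁱ` at `φ x` equals the span of the `ϖⁱ` at `x`. -/
theorem stmt16 :
    ¬ ∃ (U V : Set (Fin 5 → ℝ)) (φ ψ : (Fin 5 → ℝ) → (Fin 5 → ℝ)),
      IsOpen U ∧ IsOpen V ∧ (0 : Fin 5 → ℝ) ∈ U ∧ (0 : Fin 5 → ℝ) ∈ V ∧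
      φ 0 = 0 ∧ Set.BijOn φ U V ∧
      ContDiffOn ℝ (⊤ : ℕ∞) φ U ∧ ContDiffOn ℝ (⊤ : ℕ∞) ψ V ∧ (∀ x ∈ U, ψ (φ x) = x) ∧
      (∀ x ∈ U,
        Submodule.span ℝ
            ({(cartan 0 (φ x)).comp (fderiv ℝ φ x),
              (cartan 1 (φ x)).comp (fderiv ℝ φ x),
              (cartan 2 (φ x)).comp (fderiv ℝ φ x)} :
              Set ((Fin 5 → ℝ) →L[ℝ] ℝ)) =
          Submodule.span ℝ {cartanE 0 x, cartanE 1 x, cartanE 2 x}) := by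
  rintro ⟨U, V, φ, ψ, hU, hV, h0U, h0V, hφ0, hbij, hφsm, hψsm, hinv, hspan⟩
  -- the three expansion properties
  have h12 : Expand φ U 1 2 := by
    intro x hx
    refine expand_of_mem_span φ x 0 1 2 (fun w => gab_eq0 φ x w) ?_
    rw [← hspan x hx]
    exact Submodule.subset_span (by simp)
  have h23 : Expand φ U 2 3 := by
    intro x hx
    refine expand_of_mem_span φ x 1 2 3 (fun w => gab_eq1 φ x w) ?_
    rw [← hspan x hx]
    exact Submodule.subset_span (by simp)
  have h34 : Expand φ U 3 4 := by
    intro x hx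
    refine expand_of_mem_span φ x 2 3 4 (fun w => gab_eq2 φ x w) ?_
    rw [← hspan x hx]
    exact Submodule.subset_span (by simp)
  -- the differential at the origin is bijective
  have hφd : DifferentiableAt ℝ φ 0 :=
    (hφsm.contDiffAt (hU.mem_nhds h0U)).differentiableAt (by simp)
  have hψd : DifferentiableAt ℝ ψ (φ 0) := by
    rw [hφ0]
    exact (hψsm.contDiffAt (hV.mem_nhds h0V)).differentiableAt (by simp)
  have hcomp : HasFDerivAt (ψ ∘ φ) ((fderiv ℝ ψ (φ 0)).comp (fderiv ℝ φ 0)) 0 :=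
    (hψd.hasFDerivAt).comp 0 hφd.hasFDerivAt
  have hEq : (ψ ∘ φ) =ᶠ[𝓝 (0:E5)] id :=
    Filter.eventually_of_mem (hU.mem_nhds h0U) (fun y hy => hinv y hy)
  have hid : HasFDerivAt (id : E5 → E5) ((fderiv ℝ ψ (φ 0)).comp (fderiv ℝ φ 0)) 0 :=
    hcomp.congr_of_eventuallyEq hEq.symm
  have hBA : (fderiv ℝ ψ (φ 0)).comp (fderiv ℝ φ 0) = ContinuousLinearMap.id ℝ E5 :=
    hid.unique (hasFDerivAt_id 0)
  have hinj : Function.Injective ⇑(fderiv ℝ φ 0) := by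
    intro p q hpq
    have hp := ContinuousLinearMap.ext_iff.mp hBA p
    have hq := ContinuousLinearMap.ext_iff.mp hBA q
    simp only [ContinuousLinearMap.comp_apply, ContinuousLinearMap.id_apply] at hp hq
    rw [← hp, ← hq, hpq]
  have hsurj : Function.Surjective ⇑(fderiv ℝ φ 0) := by
    have h := LinearMap.injective_iff_surjective
      (f := ((fderiv ℝ φ 0 : E5 →L[ℝ] E5) : E5 →ₗ[ℝ] E5))
    exact h.mp hinj
  -- coefficients at the origin
  have hc1 : cc1 φ 1 2 0 = 0 := level2 hU hφsm h12 h23 h34 h0U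
  have hc2 : cc2 φ 1 2 0 = 0 := (level1 hU hφsm h12 h23 h34 h0U).1
  have hfd1 : fderiv ℝ (cc1 φ 1 2) 0 = 0 := by
    have hz : cc1 φ 1 2 =ᶠ[𝓝 (0:E5)] (fun _ => (0:ℝ)) :=
      Filter.eventually_of_mem (hU.mem_nhds h0U)
        (fun y hy => level2 hU hφsm h12 h23 h34 hy)
    rw [hz.fderiv_eq]; exact fderiv_const_apply 0
  have hfd2 : fderiv ℝ (cc2 φ 1 2) 0 = 0 := by
    have hz : cc2 φ 1 2 =ᶠ[𝓝 (0:E5)] (fun _ => (0:ℝ)) :=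
      Filter.eventually_of_mem (hU.mem_nhds h0U)
        (fun y hy => (level1 hU hφsm h12 h23 h34 hy).1)
    rw [hz.fderiv_eq]; exact fderiv_const_apply 0
  have hcc0ne : cc0 φ 1 2 0 ≠ 0 := by
    intro h0
    obtain ⟨w, hw⟩ := hsurj (Pi.single 1 1)
    have h := h12 0 h0U w
    rw [h0, hc1, hc2] at h
    have hgw : gab φ 1 2 w 0 = 1 := by
      simp [gab, hw, hφ0, sing_app]
    rw [hgw] at h
    simp at h
  obtain ⟨v, hv⟩ := hsurj (Pi.single 2 1)
  have hv1 : v 1 = 0 := by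
    have h := h12 0 h0U v
    rw [hc1, hc2] at h
    have hgv : gab φ 1 2 v 0 = 0 := by
      simp [gab, hv, hφ0, sing_app]
    rw [hgv] at h
    simp [hφ0] at h
    rcases h with h | h
    · exact absurd h hcc0ne
    · -- h : v 1 + 0 2 * v 0 = 0
      simpa using h
  -- kernel components of the images of e₃ and e₄
  have hker : ∀ (u : E5), (u 1 = 0 ∧ u 2 = 0 ∧ u 0 = 0) →
      fderiv ℝ φ 0 u 1 = 0 ∧ fderiv ℝ φ 0 u 2 = 0 ∧ fderiv ℝ φ 0 u 3 = 0 := by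
    intro u hu
    obtain ⟨hu1, hu2, hu0⟩ := hu
    have e12 := h12 0 h0U u
    have e23 := h23 0 h0U u
    have e34 := h34 0 h0U u
    simp only [gab, hφ0, Pi.zero_apply, zero_mul, add_zero, hu1, hu2, hu0,
      mul_zero, zero_add] at e12 e23 e34
    refine ⟨by simpa using e12, by simpa using e23, by simpa using e34⟩
  have hk3 := hker (Pi.single 3 1)
    ⟨by simp [sing_app], by simp [sing_app], by simp [sing_app]⟩
  have hk4 := hker (Pi.single 4 1)
    ⟨by simp [sing_app], by simp [sing_app], by simp [sing_app]⟩
  -- the final master applications at the origin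
  have hzero0 : ∀ (u : E5), u 1 = 0 → u 2 = 0 → u 0 = 0 →
      fderiv ℝ φ 0 u 0 = 0 := by
    intro u hu1 hu2 hu0
    have M := master hU hφsm 1 2 h12 h0U u v
    simp only [hφ0, Pi.zero_apply, hfd1, hfd2, ContinuousLinearMap.zero_apply,
      hc1, hc2, hv1, hu1, hu2, hu0] at M
    have hAv0 : fderiv ℝ φ 0 v 0 = 0 := by rw [hv]; simp [sing_app]
    have hAv2 : fderiv ℝ φ 0 v 2 = 1 := by rw [hv]; simp [sing_app]
    rw [hAv0, hAv2] at M
    linarith [M]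
  have h30 : fderiv ℝ φ 0 (Pi.single 3 1) 0 = 0 :=
    hzero0 (Pi.single 3 1) (by simp [sing_app]) (by simp [sing_app]) (by simp [sing_app])
  have h40 : fderiv ℝ φ 0 (Pi.single 4 1) 0 = 0 :=
    hzero0 (Pi.single 4 1) (by simp [sing_app]) (by simp [sing_app]) (by simp [sing_app])
  -- contradiction via injectivity
  set b4 := fderiv ℝ φ 0 (Pi.single 3 1) 4 with hb4
  set c4 := fderiv ℝ φ 0 (Pi.single 4 1) 4 with hc4
  have hAz : fderiv ℝ φ 0 (c4 • (Pi.single 3 1 : E5) - b4 • (Pi.single 4 1 : E5)) = 0 := by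
    rw [map_sub, map_smul, map_smul]
    funext j
    fin_cases j <;>
      simp [h30, h40, hk3.1, hk3.2.1, hk3.2.2, hk4.1, hk4.2.1, hk4.2.2] <;> ring
  have hz : (c4 • (Pi.single 3 1 : E5) - b4 • (Pi.single 4 1 : E5)) = 0 := by
    apply hinj
    rw [hAz, map_zero]
  have hc40 : c4 = 0 := by
    have := congrFun hz 3
    simpa [sing_app] using this
  have hb40 : b4 = 0 := by
    have := congrFun hz 4
    simpa [sing_app] using this
  have hA3 : fderiv ℝ φ 0 (Pi.single 3 1) = 0 := by
    funext j
    fin_cases j <;> simp [h30, hk3.1, hk3.2.1, hk3.2.2, ← hb4, hb40]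
  have : (Pi.single 3 1 : E5) = 0 := by
    apply hinj
    rw [hA3, map_zero]
  have := congrFun this 3
  simp [sing_app] at this
end
end
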